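/- arXiv:1506.03549 — 9 statements merged into one kernel-verified Lean document; each statement's English description precedes it below -/
import Mathlib

section
/- Let F : B1 → B2 be a continuously differentiable map between Banach spaces whose derivative is uniformly stable with constants A, B > 0, and suppose α_F := sup_{‖y‖=1} inf_{‖z‖=1} sup_{x∈B1} ‖F'(x)y/‖F'(x)y‖ − z‖ < 1. Then F is bi-Lipschitz; more precisely, (1−α_F)·A·‖y‖ ≤ ‖F(x+y)−F(x)‖ ≤ B‖y‖ for all x, y ∈ B1. -/
/-!
Fix a unit vector `u`. Since `α_F < 1`, for any `r ∈ (α_F, 1)` there is a unit `z` such that every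
normalized derivative `F'(w)u / ‖F'(w)u‖` lies within `r` of `z`. A norming functional `φ` of `z`
then satisfies `φ (F'(w)u) ≥ (1 - r)‖F'(w)u‖ ≥ (1 - r)A` for all `w`, so the real function
`t ↦ φ (F (x + t u))` grows at rate at least `(1 - r)A`. The upper bound is the mean value
inequality.
-/

open Filter Topology

section MeanValue

variable {E G : Type*} [NormedAddCommGroup E] [NormedSpace ℝ E]
  [NormedAddCommGroup G] [NormedSpace ℝ G] {f : E → G} {f' : E → E →L[ℝ] G}

theorem norm_image_add_sub_le_of_forall_norm_fderiv_apply_le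
    (hf : ∀ x, HasFDerivAt f (f' x) x) {C : ℝ} (hC : 0 ≤ C) (bound : ∀ x v, ‖f' x v‖ ≤ C * ‖v‖)
    (x y : E) : ‖f (x + y) - f x‖ ≤ C * ‖y‖ := by
  simpa using convex_univ.norm_image_sub_le_of_norm_hasFDerivWithin_le
    (fun w _ => (hf w).hasFDerivWithinAt) (fun w _ => (f' w).opNorm_le_bound hC (bound w))
    (Set.mem_univ x) (Set.mem_univ (x + y))

theorem mul_le_apply_image_add_smul_sub (hf : ∀ x, HasFDerivAt f (f' x) x)
    (φ : G →L[ℝ] ℝ) {c : ℝ} {u : E} (hc : ∀ x, c ≤ φ (f' x u)) (x : E) {t : ℝ} (ht : 0 ≤ t) :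
    c * t ≤ φ (f (x + t • u) - f x) := by
  have hg : ∀ s : ℝ, HasDerivAt (fun s : ℝ => φ (f (x + s • u))) (φ (f' (x + s • u) u)) s :=
    fun s => φ.hasFDerivAt.comp_hasDerivAt s <| (hf _).comp_hasDerivAt s <| by
      simpa using ((hasDerivAt_id s).smul_const u).const_add x
  have := mul_sub_le_image_sub_of_le_deriv (fun s => (hg s).differentiableAt)
    (fun s => (hg s).deriv ▸ hc _) ht
  simpa [map_sub] using this

end MeanValue

section Normalize

variable {E : Type*} [NormedAddCommGroup E] [NormedSpace ℝ E]

theorem norm_inv_norm_smul_le_one (v : E) : ‖‖v‖⁻¹ • v‖ ≤ 1 := by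
  rcases eq_or_ne v 0 with rfl | hv
  · simp
  · exact (norm_smul_inv_norm hv).le

theorem one_sub_norm_inv_norm_smul_sub_mul_norm_le (φ : E →L[ℝ] ℝ) (hφ : ‖φ‖ ≤ 1) {z : E}
    (hφz : φ z = 1) (v : E) :
    (1 - ‖‖v‖⁻¹ • v - z‖) * ‖v‖ ≤ φ v := by
  rcases eq_or_ne v 0 with rfl | hv
  · simp
  have hdist : 1 - ‖‖v‖⁻¹ • v - z‖ ≤ φ (‖v‖⁻¹ • v) := by
    have := (le_abs_self _).trans ((φ.le_opNorm (z - ‖v‖⁻¹ • v)).trans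
      (mul_le_of_le_one_left (norm_nonneg _) hφ))
    rw [map_sub, hφz, norm_sub_rev] at this
    linarith
  calc (1 - ‖‖v‖⁻¹ • v - z‖) * ‖v‖ ≤ φ (‖v‖⁻¹ • v) * ‖v‖ :=
        mul_le_mul_of_nonneg_right hdist (norm_nonneg v)
    _ = φ v := by
      rw [map_smul, smul_eq_mul, mul_comm, ← mul_assoc, mul_inv_cancel₀ (norm_ne_zero_iff.2 hv),
        one_mul]

end Normalize

theorem exists_forall_lt_of_iSup_iInf_iSup_lt {Y Z X : Type*} [Nonempty Z] [Nonempty X]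
    (f : Y → Z → X → ℝ) {C : ℝ} (hf₀ : ∀ y z x, 0 ≤ f y z x) (hfC : ∀ y z x, f y z x ≤ C)
    {r : ℝ} (hr : ⨆ y, ⨅ z, ⨆ x, f y z x < r) (y : Y) : ∃ z, ∀ x, f y z x < r := by
  have hbdd : ∀ y z, BddAbove (Set.range (f y z)) := fun y z => ⟨C, by
    rintro _ ⟨x, rfl⟩; exact hfC y z x⟩
  have hinf_le : ∀ y, ⨅ z, ⨆ x, f y z x ≤ C := fun y =>
    (ciInf_le ⟨0, by rintro _ ⟨z, rfl⟩; exact Real.iSup_nonneg (hf₀ y z)⟩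
      (Classical.arbitrary Z)).trans (ciSup_le (hfC y _))
  have hle_sup : ⨅ z, ⨆ x, f y z x ≤ ⨆ y, ⨅ z, ⨆ x, f y z x :=
    le_ciSup (f := fun y => ⨅ z, ⨆ x, f y z x) ⟨C, by rintro _ ⟨y, rfl⟩; exact hinf_le y⟩ y
  obtain ⟨z, hz⟩ := exists_lt_of_ciInf_lt (hle_sup.trans_lt hr)
  exact ⟨z, fun x => (le_ciSup (hbdd y z) x).trans_lt hz⟩

theorem bilipschitz_of_alphaF_lt_one_general
    {B1 B2 : Type*} [NormedAddCommGroup B1] [NormedSpace ℝ B1]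
    [NormedAddCommGroup B2] [NormedSpace ℝ B2]
    (F : B1 → B2) (F' : B1 → B1 →L[ℝ] B2)
    (hF : ∀ x : B1, HasFDerivAt F (F' x) x)
    (A B : ℝ) (hA : 0 < A) (hB : 0 < B)
    (hstab : ∀ x y : B1, A * ‖y‖ ≤ ‖F' x y‖ ∧ ‖F' x y‖ ≤ B * ‖y‖)
    (αF : ℝ)
    (hαdef : αF = ⨆ y : {y : B1 // ‖y‖ = 1}, ⨅ z : {z : B2 // ‖z‖ = 1},
        ⨆ x : B1, ‖(‖F' x (y : B1)‖)⁻¹ • F' x (y : B1) - (z : B2)‖)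
    (hα : αF < 1) :
    ∀ x y : B1, (1 - αF) * A * ‖y‖ ≤ ‖F (x + y) - F x‖ ∧ ‖F (x + y) - F x‖ ≤ B * ‖y‖ := by
  intro x y
  refine ⟨?_, norm_image_add_sub_le_of_forall_norm_fderiv_apply_le hF hB.le
    (fun w v => (hstab w v).2) x y⟩
  rcases eq_or_ne y 0 with rfl | hy
  · simp
  set u := ‖y‖⁻¹ • y
  have hu : ‖u‖ = 1 := norm_smul_inv_norm hy
  have hA_le : ∀ w, A ≤ ‖F' w u‖ := fun w => by simpa [hu] using (hstab w u).1
  have : Nonempty {z : B2 // ‖z‖ = 1} :=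
    ⟨⟨_, norm_smul_inv_norm (𝕜 := ℝ) (norm_pos_iff.1 (hA.trans_le (hA_le 0)))⟩⟩
  have hlim : Tendsto (fun r => (1 - r) * A * ‖y‖) (𝓝[>] αF) (𝓝 ((1 - αF) * A * ‖y‖)) :=
    (Continuous.tendsto (by fun_prop) αF).mono_left nhdsWithin_le_nhds
  refine le_of_tendsto hlim (eventually_of_mem (Ioo_mem_nhdsGT hα) fun r ⟨hαr, hr1⟩ => ?_)
  obtain ⟨z, hz⟩ := exists_forall_lt_of_iSup_iInf_iSup_lt _ (fun _ _ _ => norm_nonneg _)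
    (fun _ z _ => norm_sub_le_of_le (norm_inv_norm_smul_le_one _) z.2.le) (hαdef ▸ hαr) ⟨u, hu⟩
  obtain ⟨φ, hφ, hφz⟩ := exists_dual_vector'' ℝ (z : B2)
  have hφF' : ∀ w, (1 - r) * A ≤ φ (F' w u) := fun w => calc
    (1 - r) * A ≤ (1 - ‖‖F' w u‖⁻¹ • F' w u - z‖) * ‖F' w u‖ :=
      mul_le_mul (by linarith [hz w]) (hA_le w) hA.le (by linarith [hz w])
    _ ≤ φ (F' w u) := one_sub_norm_inv_norm_smul_sub_mul_norm_le φ hφ (by simp [hφz, z.2]) _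
  calc (1 - r) * A * ‖y‖ ≤ φ (F (x + ‖y‖ • u) - F x) :=
        mul_le_apply_image_add_smul_sub hF φ hφF' x (norm_nonneg y)
    _ ≤ ‖F (x + y) - F x‖ := by
      rw [smul_inv_smul₀ (norm_ne_zero_iff.2 hy)]
      exact (le_abs_self _).trans (φ.le_of_opNorm_le hφ _ |>.trans_eq (one_mul _))

/-- If `F` is continuously differentiable between Banach spaces with uniformly
stable derivative (constants `A, B > 0`) and
`α_F := sup_{‖y‖=1} inf_{‖z‖=1} sup_{x} ‖F'(x)y/‖F'(x)y‖ − z‖ < 1`, then `F` is bi-Lipschitz: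
`(1−α_F)·A·‖y‖ ≤ ‖F(x+y)−F(x)‖ ≤ B‖y‖` for all `x, y`. -/
theorem bilipschitz_of_alphaF_lt_one
    {B1 B2 : Type*} [NormedAddCommGroup B1] [NormedSpace ℝ B1] [CompleteSpace B1]
    [NormedAddCommGroup B2] [NormedSpace ℝ B2] [CompleteSpace B2]
    (F : B1 → B2) (F' : B1 → B1 →L[ℝ] B2)
    (hF : ∀ x : B1, HasFDerivAt F (F' x) x)
    (hF'cont : Continuous F')
    (A B : ℝ) (hA : 0 < A) (hB : 0 < B)
    (hstab : ∀ x y : B1, A * ‖y‖ ≤ ‖F' x y‖ ∧ ‖F' x y‖ ≤ B * ‖y‖)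
    (αF : ℝ)
    (hαdef : αF = ⨆ y : {y : B1 // ‖y‖ = 1}, ⨅ z : {z : B2 // ‖z‖ = 1},
        ⨆ x : B1, ‖(‖F' x (y : B1)‖)⁻¹ • F' x (y : B1) - (z : B2)‖)
    (hα : αF < 1) :
    ∀ x y : B1, (1 - αF) * A * ‖y‖ ≤ ‖F (x + y) - F x‖ ∧ ‖F (x + y) - F x‖ ≤ B * ‖y‖ :=
  bilipschitz_of_alphaF_lt_one_general F F' hF A B hA hB hstab αF hαdef hα
end

section
/- Let F : B1 → B2 be a continuously differentiable map between Banach spaces whose derivative is uniformly stable with constants A, B > 0, and let T ∈ B(B1,B2) be a bounded linear operator that is bounded below (inf_{y≠0} ‖Ty‖/‖y‖ > 0). If β_{F,T} := sup_{0≠y∈B1} sup_{x∈B1} ‖F'(x)y/‖F'(x)y‖ − Ty/‖Ty‖‖ < 1, then F is bi-Lipschitz: (1−β_{F,T})·A·‖x−y‖ ≤ ‖F(x)−F(y)‖ ≤ B‖x−y‖ for all x, y ∈ B1. -/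
/-!
Put `v = x - y`; as `T` is bounded below, `T v ≠ 0`, so Hahn–Banach gives a functional `f` of
norm at most one with `f (T v) = ‖T v‖`. Since the direction of `F' z v` lies within `β_{F,T}`
of that of `T v`, on which `f` equals `1`, we get
`f (F' z v) ≥ (1 - β_{F,T}) ‖F' z v‖ ≥ (1 - β_{F,T}) A ‖v‖` at every point `z`. The mean value
theorem for the real function `f ∘ F` on the segment `[y, x]` turns this into
`‖F x - F y‖ ≥ f (F x - F y) ≥ (1 - β_{F,T}) A ‖v‖`. The upper bound is the usual mean value
inequality.
-/

open Set

section NormalizedVectors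

variable {E : Type*} [NormedAddCommGroup E] [NormedSpace ℝ E]

theorem norm_inv_norm_smul_sub_inv_norm_smul_le_two (a b : E) :
    ‖‖a‖⁻¹ • a - ‖b‖⁻¹ • b‖ ≤ 2 := by
  have ha := mem_closedBall_zero_iff.1 (inv_norm_smul_mem_unitClosedBall a)
  have hb := mem_closedBall_zero_iff.1 (inv_norm_smul_mem_unitClosedBall b)
  linarith [norm_sub_le (‖a‖⁻¹ • a) (‖b‖⁻¹ • b)]

theorem one_sub_mul_norm_le_apply_of_norm_inv_norm_smul_sub_le {f : StrongDual ℝ E}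
    (hf : ‖f‖ ≤ 1) {w : E} (hw : w ≠ 0) (hfw : f w = ‖w‖) {a : E} {β : ℝ}
    (h : ‖‖a‖⁻¹ • a - ‖w‖⁻¹ • w‖ ≤ β) : (1 - β) * ‖a‖ ≤ f a := by
  have hf_unit_w : f (‖w‖⁻¹ • w) = 1 := by
    rw [map_smul, hfw, smul_eq_mul, inv_mul_cancel₀ (norm_ne_zero_iff.2 hw)]
  have hf_diff : |f (‖a‖⁻¹ • a - ‖w‖⁻¹ • w)| ≤ β :=
    calc |f (‖a‖⁻¹ • a - ‖w‖⁻¹ • w)| ≤ ‖f‖ * ‖‖a‖⁻¹ • a - ‖w‖⁻¹ • w‖ := f.le_opNorm _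
      _ ≤ 1 * β := mul_le_mul hf h (norm_nonneg _) zero_le_one
      _ = β := one_mul β
  have hf_unit_a : 1 - β ≤ f (‖a‖⁻¹ • a) := by
    rw [map_sub, hf_unit_w] at hf_diff
    linarith [neg_abs_le (f (‖a‖⁻¹ • a) - 1)]
  calc (1 - β) * ‖a‖ ≤ f (‖a‖⁻¹ • a) * ‖a‖ := mul_le_mul_of_nonneg_right hf_unit_a (norm_nonneg a)
    _ = f a := by
      rcases eq_or_ne a 0 with rfl | ha
      · simp
      · rw [map_smul, smul_eq_mul]
        field_simp [norm_ne_zero_iff.2 ha]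

end NormalizedVectors

section MeanValue

variable {E G : Type*} [NormedAddCommGroup E] [NormedSpace ℝ E] [NormedAddCommGroup G]
  [NormedSpace ℝ G] {F : E → G} {F' : E → E →L[ℝ] G}

theorem norm_sub_le_of_forall_norm_fderiv_apply_le (hF : ∀ z, HasFDerivAt F (F' z) z) {x y : E}
    {C : ℝ} (hC : ∀ z, ‖F' z (x - y)‖ ≤ C) : ‖F x - F y‖ ≤ C := by
  have hderiv : ∀ t ∈ Icc (0 : ℝ) 1, HasDerivWithinAt (F ∘ AffineMap.lineMap y x)
      (F' (AffineMap.lineMap y x t) (x - y)) (Icc 0 1) t := fun t _ =>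
    (hF _).comp_hasDerivWithinAt t AffineMap.hasDerivWithinAt_lineMap
  simpa using norm_image_sub_le_of_norm_deriv_le_segment_01' hderiv fun t _ => hC _

theorem le_norm_sub_of_forall_le_apply_fderiv (hF : ∀ z, HasFDerivAt F (F' z) z)
    {f : StrongDual ℝ G} (hf : ‖f‖ ≤ 1) {x y : E} {C : ℝ} (hC : ∀ z, C ≤ f (F' z (x - y))) :
    C ≤ ‖F x - F y‖ := by
  obtain ⟨z, -, hz⟩ := domain_mvt (f := f ∘ F) (f' := fun z => f.comp (F' z))
    (fun z _ => (f.hasFDerivAt.comp z (hF z)).hasFDerivWithinAt) convex_univ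
    (mem_univ y) (mem_univ x)
  calc C ≤ f (F x - F y) := by simpa [map_sub] using (hC z).trans_eq hz.symm
    _ ≤ ‖f‖ * ‖F x - F y‖ := (le_abs_self _).trans (f.le_opNorm _)
    _ ≤ ‖F x - F y‖ := mul_le_of_le_one_left (norm_nonneg _) hf

end MeanValue

theorem bilipschitz_of_betaFT_lt_one_general
    {B1 B2 : Type*} [NormedAddCommGroup B1] [NormedSpace ℝ B1]
    [NormedAddCommGroup B2] [NormedSpace ℝ B2]
    (F : B1 → B2) (F' : B1 → B1 →L[ℝ] B2)
    (hF : ∀ x : B1, HasFDerivAt F (F' x) x)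
    (A B : ℝ)
    (hstab : ∀ x y : B1, A * ‖y‖ ≤ ‖F' x y‖ ∧ ‖F' x y‖ ≤ B * ‖y‖)
    (T : B1 →L[ℝ] B2)
    (hTbb : ∃ c > 0, ∀ y : B1, c * ‖y‖ ≤ ‖T y‖)
    (βFT : ℝ)
    (hβdef : βFT = ⨆ y : {y : B1 // y ≠ 0}, ⨆ x : B1,
        ‖(‖F' x (y : B1)‖)⁻¹ • F' x (y : B1) - (‖T (y : B1)‖)⁻¹ • T (y : B1)‖)
    (hβ : βFT < 1) :
    ∀ x y : B1, (1 - βFT) * A * ‖x - y‖ ≤ ‖F x - F y‖ ∧ ‖F x - F y‖ ≤ B * ‖x - y‖ := by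
  intro x y
  obtain ⟨c, hc, hcT⟩ := hTbb
  have hβ_term : ∀ z w, w ≠ 0 → ‖‖F' z w‖⁻¹ • F' z w - ‖T w‖⁻¹ • T w‖ ≤ βFT := by
    intro z w hw
    rw [hβdef]
    refine le_ciSup₂ (f := fun (w : {w : B1 // w ≠ 0}) z =>
      ‖‖F' z w‖⁻¹ • F' z w - ‖T w‖⁻¹ • T w‖) ⟨2, ?_⟩ ⟨w, hw⟩ z
    simp only [upperBounds, mem_iUnion, mem_range]
    rintro _ ⟨w, z, rfl⟩
    exact norm_inv_norm_smul_sub_inv_norm_smul_le_two _ _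
  refine ⟨?_, norm_sub_le_of_forall_norm_fderiv_apply_le hF fun z => (hstab z _).2⟩
  rcases eq_or_ne x y with rfl | hxy
  · simp
  have hv : x - y ≠ 0 := sub_ne_zero.2 hxy
  have hTv : T (x - y) ≠ 0 :=
    norm_pos_iff.1 ((mul_pos hc (norm_pos_iff.2 hv)).trans_le (hcT _))
  obtain ⟨f, hf, hfT⟩ := exists_dual_vector'' ℝ (T (x - y))
  refine le_norm_sub_of_forall_le_apply_fderiv hF hf fun z => ?_
  calc (1 - βFT) * A * ‖x - y‖ = (1 - βFT) * (A * ‖x - y‖) := mul_assoc _ _ _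
    _ ≤ (1 - βFT) * ‖F' z (x - y)‖ :=
      mul_le_mul_of_nonneg_left (hstab z _).1 (sub_nonneg.2 hβ.le)
    _ ≤ f (F' z (x - y)) :=
      one_sub_mul_norm_le_apply_of_norm_inv_norm_smul_sub_le hf hTv (by simpa using hfT)
        (hβ_term z _ hv)

/-- If `F` is continuously differentiable between Banach spaces with uniformly
stable derivative (constants `A, B > 0`), `T` is a bounded below bounded linear operator, and
`β_{F,T} := sup_{y≠0} sup_{x} ‖F'(x)y/‖F'(x)y‖ − Ty/‖Ty‖‖ < 1`, then `F` is bi-Lipschitz: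
`(1−β_{F,T})·A·‖x−y‖ ≤ ‖F(x)−F(y)‖ ≤ B‖x−y‖`. -/
theorem bilipschitz_of_betaFT_lt_one
    {B1 B2 : Type*} [NormedAddCommGroup B1] [NormedSpace ℝ B1] [CompleteSpace B1]
    [NormedAddCommGroup B2] [NormedSpace ℝ B2] [CompleteSpace B2]
    (F : B1 → B2) (F' : B1 → B1 →L[ℝ] B2)
    (hF : ∀ x : B1, HasFDerivAt F (F' x) x)
    (hF'cont : Continuous F')
    (A B : ℝ) (hA : 0 < A) (hB : 0 < B)
    (hstab : ∀ x y : B1, A * ‖y‖ ≤ ‖F' x y‖ ∧ ‖F' x y‖ ≤ B * ‖y‖)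
    (T : B1 →L[ℝ] B2)
    (hTbb : ∃ c > 0, ∀ y : B1, c * ‖y‖ ≤ ‖T y‖)
    (βFT : ℝ)
    (hβdef : βFT = ⨆ y : {y : B1 // y ≠ 0}, ⨆ x : B1,
        ‖(‖F' x (y : B1)‖)⁻¹ • F' x (y : B1) - (‖T (y : B1)‖)⁻¹ • T (y : B1)‖)
    (hβ : βFT < 1) :
    ∀ x y : B1, (1 - βFT) * A * ‖x - y‖ ≤ ‖F x - F y‖ ∧ ‖F x - F y‖ ≤ B * ‖x - y‖ :=
  bilipschitz_of_betaFT_lt_one_general F F' hF A B hstab T hTbb βFT hβdef hβ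
end

section
/- Let H1 and H2 be Hilbert spaces and F : H1 → H2 a continuously differentiable map whose derivative is uniformly stable with constants A, B > 0. Suppose T ∈ B(H1,H2) is bounded below and β_{F,T} := sup_{0≠v∈H1} sup_{u∈H1} ‖F'(u)v/‖F'(u)v‖ − Tv/‖Tv‖‖ < √2. Then F is bi-Lipschitz; more precisely, ((2−β_{F,T}²)/2)·A·‖u−w‖ ≤ ‖F(u)−F(w)‖ ≤ B‖u−w‖ for all u, w ∈ H1. -/
open NormedSpace
open scoped RealInnerProductSpace

/-!
The upper bound is the mean value inequality along the segment from `w` to `u`. For the lower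
bound put `v = u - w` and let `e` be the unit vector `Tv/‖Tv‖`. For unit vectors `a, e` one has
`⟪a, e⟫ = 1 - ‖a - e‖² / 2`, so `β_{F,T} < √2` forces `⟪F'(x)v, e⟫ ≥ (2 - β²)/2 · ‖F'(x)v‖`
at every point `x`: all derivatives in direction `v` point into a common half-space. Integrating
`t ↦ ⟪F(w + tv), e⟫` over `[0, 1]` gives `⟪F u - F w, e⟫ ≥ (2 - β²)/2 · A‖v‖`.
-/

section Normalize

variable {V : Type*} [NormedAddCommGroup V] [NormedSpace ℝ V]

theorem norm_normalize_le_one (x : V) : ‖normalize x‖ ≤ 1 := by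
  rcases eq_or_ne x 0 with rfl | hx
  · simp [normalize_zero_eq_zero]
  · exact (norm_normalize_eq_one_iff.2 hx).le

theorem norm_normalize_sub_normalize_le_two (x y : V) : ‖normalize x - normalize y‖ ≤ 2 :=
  (norm_sub_le _ _).trans <| by linarith [norm_normalize_le_one x, norm_normalize_le_one y]

end Normalize

section InnerProduct

variable {V : Type*} [NormedAddCommGroup V] [InnerProductSpace ℝ V]

theorem inner_eq_one_sub_norm_sub_sq_div_two {a e : V} (ha : ‖a‖ = 1) (he : ‖e‖ = 1) :
    ⟪a, e⟫ = 1 - ‖a - e‖ ^ 2 / 2 := by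
  rw [norm_sub_sq_real, ha, he]
  ring

theorem mul_norm_le_inner_of_norm_normalize_sub_le {x e : V} {β : ℝ} (he : ‖e‖ = 1)
    (h : ‖normalize x - e‖ ≤ β) : (2 - β ^ 2) / 2 * ‖x‖ ≤ ⟪x, e⟫ := by
  rcases eq_or_ne x 0 with rfl | hx
  · simp
  have hcos : (2 - β ^ 2) / 2 ≤ ⟪normalize x, e⟫ := by
    rw [inner_eq_one_sub_norm_sub_sq_div_two (norm_normalize_eq_one_iff.2 hx) he]
    nlinarith [norm_nonneg (normalize x - e)]
  calc (2 - β ^ 2) / 2 * ‖x‖ ≤ ⟪normalize x, e⟫ * ‖x‖ := by gcongr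
    _ = ⟪x, e⟫ := by rw [mul_comm, ← real_inner_smul_left, norm_smul_normalize]

end InnerProduct

section Segment

variable {E : Type*} [NormedAddCommGroup E] [NormedSpace ℝ E]

theorem hasDerivAt_comp_add_smul {G : Type*} [NormedAddCommGroup G] [NormedSpace ℝ G]
    {f : E → G} {f' : E → E →L[ℝ] G} (hf : ∀ x, HasFDerivAt f (f' x) x) (w v : E) (t : ℝ) :
    HasDerivAt (fun t : ℝ => f (w + t • v)) (f' (w + t • v) v) t := by
  have hline : HasDerivAt (fun t : ℝ => w + t • v) v t := by
    simpa using ((hasDerivAt_id t).smul_const v).const_add w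
  exact (hf (w + t • v)).comp_hasDerivAt t hline

theorem norm_sub_le_of_forall_norm_fderiv_apply_le_s5 {G : Type*} [NormedAddCommGroup G]
    [NormedSpace ℝ G] {f : E → G} {f' : E → E →L[ℝ] G} (hf : ∀ x, HasFDerivAt f (f' x) x)
    {u w : E} {C : ℝ} (h : ∀ x, ‖f' x (u - w)‖ ≤ C) : ‖f u - f w‖ ≤ C := by
  simpa using norm_image_sub_le_of_norm_deriv_le_segment_01'
    (fun t _ => (hasDerivAt_comp_add_smul hf w (u - w) t).hasDerivWithinAt) (fun t _ => h _)

theorem le_inner_sub_of_forall_le_inner_fderiv_apply {G : Type*} [NormedAddCommGroup G]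
    [InnerProductSpace ℝ G] {f : E → G} {f' : E → E →L[ℝ] G} (hf : ∀ x, HasFDerivAt f (f' x) x)
    {u w : E} (e : G) {C : ℝ} (h : ∀ x, C ≤ ⟪f' x (u - w), e⟫) : C ≤ ⟪f u - f w, e⟫ := by
  have hg (t : ℝ) : HasDerivAt (fun t : ℝ => ⟪f (w + t • (u - w)), e⟫)
      ⟪f' (w + t • (u - w)) (u - w), e⟫ t :=
    (hasDerivAt_comp_add_smul hf w (u - w) t).inner ℝ (hasDerivAt_const t e) |>.congr_deriv
      (by simp)
  have := mul_sub_le_image_sub_of_le_deriv (fun t => (hg t).differentiableAt)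
    (fun t => (hg t).deriv ▸ h _) zero_le_one
  simpa [inner_sub_left] using this

end Segment

theorem bilipschitz_of_betaFT_lt_sqrt_two_general
    {H1 H2 : Type*} [NormedAddCommGroup H1] [InnerProductSpace ℝ H1] [CompleteSpace H1]
    [NormedAddCommGroup H2] [InnerProductSpace ℝ H2] [CompleteSpace H2]
    (F : H1 → H2) (F' : H1 → H1 →L[ℝ] H2)
    (hF : ∀ x : H1, HasFDerivAt F (F' x) x)
    (A B : ℝ)
    (hstab : ∀ x y : H1, A * ‖y‖ ≤ ‖F' x y‖ ∧ ‖F' x y‖ ≤ B * ‖y‖)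
    (T : H1 →L[ℝ] H2)
    (hTbb : ∃ c > 0, ∀ y : H1, c * ‖y‖ ≤ ‖T y‖)
    (βFT : ℝ)
    (hβdef : βFT = ⨆ v : {v : H1 // v ≠ 0}, ⨆ u : H1,
        ‖(‖F' u (v : H1)‖)⁻¹ • F' u (v : H1) - (‖T (v : H1)‖)⁻¹ • T (v : H1)‖)
    (hβ : βFT < Real.sqrt 2) :
    ∀ u w : H1, (2 - βFT ^ 2) / 2 * A * ‖u - w‖ ≤ ‖F u - F w‖ ∧ ‖F u - F w‖ ≤ B * ‖u - w‖ := by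
  intro u w
  refine ⟨?_, norm_sub_le_of_forall_norm_fderiv_apply_le_s5 hF fun x => (hstab x (u - w)).2⟩
  rcases eq_or_ne u w with rfl | hne
  · simp
  obtain ⟨c, hc, hT⟩ := hTbb
  have hTv : T (u - w) ≠ 0 := fun h => by
    have := hT (u - w)
    rw [h, norm_zero] at this
    exact this.not_gt (mul_pos hc (norm_pos_iff.2 (sub_ne_zero.2 hne)))
  set e := normalize (T (u - w))
  have he : ‖e‖ = 1 := norm_normalize_eq_one_iff.2 hTv
  have hdev (x : H1) : ‖normalize (F' x (u - w)) - e‖ ≤ βFT := by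
    rw [hβdef]
    -- `normalize x` unfolds to the `‖x‖⁻¹ • x` of `hβdef`
    refine le_ciSup₂ (f := fun (v : {v : H1 // v ≠ 0}) x =>
      ‖normalize (F' x (v : H1)) - normalize (T (v : H1))‖) ?_ ⟨u - w, sub_ne_zero.2 hne⟩ x
    refine ⟨2, ?_⟩
    rintro _ ⟨_, ⟨v, rfl⟩, ⟨x, rfl⟩⟩
    exact norm_normalize_sub_normalize_le_two _ _
  have hβ2 : βFT ^ 2 ≤ 2 := ((Real.lt_sqrt ((norm_nonneg _).trans (hdev u))).1 hβ).le
  calc (2 - βFT ^ 2) / 2 * A * ‖u - w‖ ≤ ⟪F u - F w, e⟫ :=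
        le_inner_sub_of_forall_le_inner_fderiv_apply hF e fun x => calc
          (2 - βFT ^ 2) / 2 * A * ‖u - w‖ = (2 - βFT ^ 2) / 2 * (A * ‖u - w‖) := mul_assoc _ _ _
          _ ≤ (2 - βFT ^ 2) / 2 * ‖F' x (u - w)‖ :=
            mul_le_mul_of_nonneg_left (hstab x _).1 (by linarith)
          _ ≤ ⟪F' x (u - w), e⟫ := mul_norm_le_inner_of_norm_normalize_sub_le he (hdev x)
    _ ≤ ‖F u - F w‖ := by simpa [he] using real_inner_le_norm (F u - F w) e

/-- In Hilbert space setting, if `F` is continuously differentiable with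
uniformly stable derivative (constants `A, B > 0`), `T` is bounded below and
`β_{F,T} = sup_{v≠0} sup_{u} ‖F'(u)v/‖F'(u)v‖ − Tv/‖Tv‖‖ < √2`, then `F` is bi-Lipschitz:
`((2−β²)/2)·A·‖u−w‖ ≤ ‖F(u)−F(w)‖ ≤ B‖u−w‖`. -/
theorem bilipschitz_of_betaFT_lt_sqrt_two
    {H1 H2 : Type*} [NormedAddCommGroup H1] [InnerProductSpace ℝ H1] [CompleteSpace H1]
    [NormedAddCommGroup H2] [InnerProductSpace ℝ H2] [CompleteSpace H2]
    (F : H1 → H2) (F' : H1 → H1 →L[ℝ] H2)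
    (hF : ∀ x : H1, HasFDerivAt F (F' x) x)
    (hF'cont : Continuous F')
    (A B : ℝ) (hA : 0 < A) (hB : 0 < B)
    (hstab : ∀ x y : H1, A * ‖y‖ ≤ ‖F' x y‖ ∧ ‖F' x y‖ ≤ B * ‖y‖)
    (T : H1 →L[ℝ] H2)
    (hTbb : ∃ c > 0, ∀ y : H1, c * ‖y‖ ≤ ‖T y‖)
    (βFT : ℝ)
    (hβdef : βFT = ⨆ v : {v : H1 // v ≠ 0}, ⨆ u : H1,
        ‖(‖F' u (v : H1)‖)⁻¹ • F' u (v : H1) - (‖T (v : H1)‖)⁻¹ • T (v : H1)‖)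
    (hβ : βFT < Real.sqrt 2) :
    ∀ u w : H1, (2 - βFT ^ 2) / 2 * A * ‖u - w‖ ≤ ‖F u - F w‖ ∧ ‖F u - F w‖ ≤ B * ‖u - w‖ :=
  bilipschitz_of_betaFT_lt_sqrt_two_general F F' hF A B hstab T hTbb βFT hβdef hβ
end

section
/- Let H1 and H2 be Hilbert spaces and F : H1 → H2 a continuously differentiable map whose derivative is uniformly stable. Suppose there exists a bounded below linear operator T ∈ B(H1,H2) and constants A₁, B₁ > 0 such that A₁‖Tv‖² ≤ ⟨F'(u)v, Tv⟩ ≤ B₁‖Tv‖² for all u, v ∈ H1. Then F has the bi-Lipschitz property: there exist constants A', B' > 0 with A'‖u−w‖ ≤ ‖F(u)−F(w)‖ ≤ B'‖u−w‖ for all u, w ∈ H1. -/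
/-!
The upper bound is the mean value inequality, since `‖F' x‖ ≤ B`. For the lower bound put
`v = u - w`: the scalar function `t ↦ ⟪F (w + t • v), T v⟫` has derivative
`⟪F' (w + t • v) v, T v⟫ ≥ A₁ ‖T v‖²`, so `A₁ ‖T v‖² ≤ ⟪F u - F w, T v⟫ ≤ ‖F u - F w‖ ‖T v‖`.
Dividing by `‖T v‖` and using `c ‖v‖ ≤ ‖T v‖` gives `A₁ c ‖u - w‖ ≤ ‖F u - F w‖`.
-/

open scoped RealInnerProductSpace

section

variable {E G : Type*} [NormedAddCommGroup E] [NormedSpace ℝ E]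
  [NormedAddCommGroup G] [InnerProductSpace ℝ G]

theorem le_inner_sub_of_le_inner_fderiv {f : E → G} {f' : E → E →L[ℝ] G}
    (hf : ∀ x, HasFDerivAt f (f' x) x) {a : ℝ} {u w : E} {z : G}
    (hle : ∀ x, a ≤ ⟪f' x (u - w), z⟫) : a ≤ ⟪f u - f w, z⟫ := by
  set φ : ℝ → ℝ := fun t => ⟪f (w + t • (u - w)), z⟫
  have hφ : ∀ t, HasDerivAt φ ⟪f' (w + t • (u - w)) (u - w), z⟫ t := fun t => by
    have hline : HasDerivAt (fun t : ℝ => w + t • (u - w)) (u - w) t := by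
      simpa using ((hasDerivAt_id t).smul_const (u - w)).const_add w
    simpa using ((hf _).comp_hasDerivAt t hline).inner ℝ (hasDerivAt_const t z)
  have hmvt := mul_sub_le_image_sub_of_le_deriv (fun t => (hφ t).differentiableAt)
    (fun t => (hφ t).deriv ▸ hle _) zero_le_one
  simpa [φ, inner_sub_left] using hmvt

theorem mul_norm_le_norm_of_mul_sq_le_inner {x y : G} {a : ℝ} (h : a * ‖y‖ ^ 2 ≤ ⟪x, y⟫) :
    a * ‖y‖ ≤ ‖x‖ := by
  rcases eq_or_ne y 0 with rfl | hy
  · simp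
  have hCS : a * ‖y‖ * ‖y‖ ≤ ‖x‖ * ‖y‖ := by
    nlinarith [real_inner_le_norm x y]
  exact le_of_mul_le_mul_right hCS (norm_pos_iff.mpr hy)

end

theorem bilipschitz_of_positivity_condition_general
    {H1 H2 : Type*} [NormedAddCommGroup H1] [InnerProductSpace ℝ H1]
    [NormedAddCommGroup H2] [InnerProductSpace ℝ H2]
    (F : H1 → H2) (F' : H1 → H1 →L[ℝ] H2)
    (hF : ∀ x : H1, HasFDerivAt F (F' x) x)
    (A B : ℝ) (hB : 0 < B)
    (hstab : ∀ x y : H1, A * ‖y‖ ≤ ‖F' x y‖ ∧ ‖F' x y‖ ≤ B * ‖y‖)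
    (T : H1 →L[ℝ] H2)
    (hTbb : ∃ c > 0, ∀ y : H1, c * ‖y‖ ≤ ‖T y‖)
    (A₁ B₁ : ℝ) (hA₁ : 0 < A₁)
    (hpos : ∀ u v : H1, A₁ * ‖T v‖ ^ 2 ≤ ⟪F' u v, T v⟫ ∧ ⟪F' u v, T v⟫ ≤ B₁ * ‖T v‖ ^ 2) :
    ∃ A' B' : ℝ, 0 < A' ∧ 0 < B' ∧
      ∀ u w : H1, A' * ‖u - w‖ ≤ ‖F u - F w‖ ∧ ‖F u - F w‖ ≤ B' * ‖u - w‖ := by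
  obtain ⟨c, hc, hT⟩ := hTbb
  have hF'norm : ∀ x, ‖F' x‖ ≤ B := fun x =>
    (F' x).opNorm_le_bound hB.le fun y => (hstab x y).2
  refine ⟨A₁ * c, B, by positivity, hB, fun u w => ⟨?_, ?_⟩⟩
  · have hTv : A₁ * ‖T (u - w)‖ ≤ ‖F u - F w‖ :=
      mul_norm_le_norm_of_mul_sq_le_inner <|
        le_inner_sub_of_le_inner_fderiv hF fun x => (hpos x (u - w)).1
    calc A₁ * c * ‖u - w‖ = A₁ * (c * ‖u - w‖) := mul_assoc _ _ _
      _ ≤ A₁ * ‖T (u - w)‖ := mul_le_mul_of_nonneg_left (hT _) hA₁.le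
      _ ≤ ‖F u - F w‖ := hTv
  · exact convex_univ.norm_image_sub_le_of_norm_hasFDerivWithin_le
      (fun x _ => (hF x).hasFDerivWithinAt) (fun x _ => hF'norm x) trivial trivial

/-- In Hilbert space setting, if `F` is continuously differentiable with
uniformly stable derivative and there exist a bounded below linear operator `T` and constants
`A₁, B₁ > 0` with `A₁‖Tv‖² ≤ ⟨F'(u)v, Tv⟩ ≤ B₁‖Tv‖²` for all `u, v`, then `F` is bi-Lipschitz. -/
theorem bilipschitz_of_positivity_condition
    {H1 H2 : Type*} [NormedAddCommGroup H1] [InnerProductSpace ℝ H1] [CompleteSpace H1]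
    [NormedAddCommGroup H2] [InnerProductSpace ℝ H2] [CompleteSpace H2]
    (F : H1 → H2) (F' : H1 → H1 →L[ℝ] H2)
    (hF : ∀ x : H1, HasFDerivAt F (F' x) x)
    (hF'cont : Continuous F')
    (A B : ℝ) (hA : 0 < A) (hB : 0 < B)
    (hstab : ∀ x y : H1, A * ‖y‖ ≤ ‖F' x y‖ ∧ ‖F' x y‖ ≤ B * ‖y‖)
    (T : H1 →L[ℝ] H2)
    (hTbb : ∃ c > 0, ∀ y : H1, c * ‖y‖ ≤ ‖T y‖)
    (A₁ B₁ : ℝ) (hA₁ : 0 < A₁) (hB₁ : 0 < B₁)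
    (hpos : ∀ u v : H1, A₁ * ‖T v‖ ^ 2 ≤ ⟪F' u v, T v⟫ ∧ ⟪F' u v, T v⟫ ≤ B₁ * ‖T v‖ ^ 2) :
    ∃ A' B' : ℝ, 0 < A' ∧ 0 < B' ∧
      ∀ u w : H1, A' * ‖u - w‖ ≤ ‖F u - F w‖ ∧ ‖F u - F w‖ ≤ B' * ‖u - w‖ :=
  bilipschitz_of_positivity_condition_general F F' hF A B hB hstab T hTbb A₁ B₁ hA₁ hpos
end

section
/- Let H1 and H2 be Hilbert spaces and F : H1 → H2 a continuously differentiable map whose derivative is uniformly stable. If there exists a bounded below linear operator T ∈ B(H1,H2) with δ_{F,T} := sup_{0≠y∈H1} sup_{z∈H1} ‖F'(z)y − Ty‖/‖Ty‖ < √2 − 1, then F has the bi-Lipschitz property: there exist constants A', B' > 0 with A'‖u−w‖ ≤ ‖F(u)−F(w)‖ ≤ B'‖u−w‖ for all u, w ∈ H1. -/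
/-!
Write `y = u - w`. Along the segment from `w` to `u` the derivative of `F` differs from `T` in the
direction `y` by at most `δ ‖T y‖`, so by the mean value inequality `F u - F w` lies within
`δ ‖T y‖` of `T y`. Since `δ < 1` and `‖T y‖ ≥ c ‖y‖`, this gives `‖F u - F w‖ ≥ (1 - δ) c ‖y‖`.
The upper bound is the mean value inequality for the bounded derivative.
-/

open Set

/-- The paper's `δ_{F,T}` for the family of derivatives `S = F'`. -/
noncomputable def relDeviation {Z E F : Type*} [NormedAddCommGroup E] [NormedSpace ℝ E]
    [NormedAddCommGroup F] [NormedSpace ℝ F] (S : Z → E →L[ℝ] F) (T : E →L[ℝ] F) : ℝ :=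
  ⨆ y : {y : E // y ≠ 0}, ⨆ z, ‖S z (y : E) - T (y : E)‖ / ‖T (y : E)‖

section

variable {E F : Type*} [NormedAddCommGroup E] [NormedSpace ℝ E] [NormedAddCommGroup F]
  [NormedSpace ℝ F]

/-- Without this bound the `⨆` in `relDeviation` would take the junk value `0`. -/
lemma norm_apply_sub_div_norm_le {Z : Type*} {S : Z → E →L[ℝ] F} {T : E →L[ℝ] F}
    {B c : ℝ} (hS : ∀ z, ‖S z‖ ≤ B) (hc : 0 < c) (hT : ∀ y, c * ‖y‖ ≤ ‖T y‖) (z : Z) (y : E) :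
    ‖S z y - T y‖ / ‖T y‖ ≤ (B + ‖T‖) / c := by
  have hB : 0 ≤ B + ‖T‖ := add_nonneg ((norm_nonneg _).trans (hS z)) (norm_nonneg _)
  rcases eq_or_ne y 0 with rfl | hy
  · simpa using div_nonneg hB hc.le
  have hTy : 0 < ‖T y‖ := (mul_pos hc (norm_pos_iff.mpr hy)).trans_le (hT y)
  rw [div_le_iff₀ hTy]
  calc ‖S z y - T y‖ ≤ ‖S z - T‖ * ‖y‖ := (S z - T).le_opNorm y
    _ ≤ (B + ‖T‖) * ‖y‖ := by
        gcongr
        exact (norm_sub_le _ _).trans (add_le_add_left (hS z) _)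
    _ = (B + ‖T‖) / c * (c * ‖y‖) := by field_simp
    _ ≤ (B + ‖T‖) / c * ‖T y‖ := by gcongr; exact hT y

lemma norm_apply_sub_le_relDeviation_mul {Z : Type*} {S : Z → E →L[ℝ] F} {T : E →L[ℝ] F}
    {B c : ℝ} (hS : ∀ z, ‖S z‖ ≤ B) (hc : 0 < c) (hT : ∀ y, c * ‖y‖ ≤ ‖T y‖) (z : Z) (y : E) :
    ‖S z y - T y‖ ≤ relDeviation S T * ‖T y‖ := by
  rcases eq_or_ne y 0 with rfl | hy
  · simp
  have hTy : 0 < ‖T y‖ := (mul_pos hc (norm_pos_iff.mpr hy)).trans_le (hT y)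
  rw [← div_le_iff₀ hTy]
  have : Nonempty Z := ⟨z⟩
  have hbound := norm_apply_sub_div_norm_le hS hc hT
  calc ‖S z y - T y‖ / ‖T y‖ ≤ ⨆ z, ‖S z y - T y‖ / ‖T y‖ :=
        le_ciSup ⟨_, forall_mem_range.mpr (hbound · y)⟩ z
    _ ≤ relDeviation S T :=
        le_ciSup (f := fun y : {y : E // y ≠ 0} => ⨆ z, ‖S z (y : E) - T (y : E)‖ / ‖T (y : E)‖)
          ⟨_, forall_mem_range.mpr fun y => ciSup_le (hbound · y)⟩ ⟨y, hy⟩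

lemma norm_image_sub_sub_le_of_norm_apply_sub_le {f : E → F} {f' : E → E →L[ℝ] F}
    (hf : ∀ x, HasFDerivAt f (f' x) x) (L : E →L[ℝ] F) {C : ℝ} {u w : E}
    (hC : ∀ x, ‖f' x (u - w) - L (u - w)‖ ≤ C) :
    ‖f u - f w - L (u - w)‖ ≤ C := by
  set y := u - w
  have hline : ∀ t : ℝ, HasDerivAt (fun t : ℝ => f (w + t • y) - t • L y)
      (f' (w + t • y) y - L y) t := by
    intro t
    have hpath : HasDerivAt (fun t : ℝ => w + t • y) y t := by
      simpa using ((hasDerivAt_id t).smul_const y).const_add w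
    have hL : HasDerivAt (fun t : ℝ => t • L y) (L y) t := by
      simpa using (hasDerivAt_id t).smul_const (L y)
    exact ((hf _).comp_hasDerivAt t hpath).sub hL
  have := norm_image_sub_le_of_norm_deriv_le_segment_01' (fun t _ => (hline t).hasDerivWithinAt)
    fun t _ => hC (w + t • y)
  simp only [one_smul, zero_smul, add_zero, sub_zero, y, add_sub_cancel] at this
  rwa [sub_right_comm]

lemma mul_norm_sub_le_norm_image_sub {f : E → F} {f' : E → E →L[ℝ] F}
    (hf : ∀ x, HasFDerivAt f (f' x) x) {T : E →L[ℝ] F} {c δ : ℝ} (hT : ∀ y, c * ‖y‖ ≤ ‖T y‖)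
    (hδ : δ ≤ 1) (hdev : ∀ x y, ‖f' x y - T y‖ ≤ δ * ‖T y‖) (u w : E) :
    (1 - δ) * c * ‖u - w‖ ≤ ‖f u - f w‖ := by
  have hmv := norm_image_sub_sub_le_of_norm_apply_sub_le hf T fun x => hdev x (u - w)
  have hrev : ‖T (u - w)‖ - ‖f u - f w‖ ≤ ‖f u - f w - T (u - w)‖ := by
    rw [norm_sub_rev (f u - f w)]
    exact norm_sub_norm_le _ _
  calc (1 - δ) * c * ‖u - w‖ = (1 - δ) * (c * ‖u - w‖) := mul_assoc _ _ _
    _ ≤ (1 - δ) * ‖T (u - w)‖ := mul_le_mul_of_nonneg_left (hT _) (by linarith)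
    _ ≤ ‖f u - f w‖ := by linarith

end

theorem bilipschitz_of_deltaFT_lt_sqrt_two_sub_one_general
    {H1 H2 : Type*} [NormedAddCommGroup H1] [InnerProductSpace ℝ H1]
    [NormedAddCommGroup H2] [InnerProductSpace ℝ H2]
    (F : H1 → H2) (F' : H1 → H1 →L[ℝ] H2)
    (hF : ∀ x : H1, HasFDerivAt F (F' x) x)
    (A B : ℝ) (hB : 0 < B)
    (hstab : ∀ x y : H1, A * ‖y‖ ≤ ‖F' x y‖ ∧ ‖F' x y‖ ≤ B * ‖y‖)
    (T : H1 →L[ℝ] H2)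
    (hTbb : ∃ c > 0, ∀ y : H1, c * ‖y‖ ≤ ‖T y‖)
    (δFT : ℝ)
    (hδdef : δFT = ⨆ y : {y : H1 // y ≠ 0}, ⨆ z : H1, ‖F' z (y : H1) - T (y : H1)‖ / ‖T (y : H1)‖)
    (hδ : δFT < Real.sqrt 2 - 1) :
    ∃ A' B' : ℝ, 0 < A' ∧ 0 < B' ∧
      ∀ u w : H1, A' * ‖u - w‖ ≤ ‖F u - F w‖ ∧ ‖F u - F w‖ ≤ B' * ‖u - w‖ := by
  obtain ⟨c, hc, hT⟩ := hTbb
  have hF'B : ∀ x, ‖F' x‖ ≤ B := fun x => (F' x).opNorm_le_bound hB.le fun y => (hstab x y).2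
  have hδ1 : δFT < 1 := by
    have : Real.sqrt 2 < 2 := (Real.sqrt_lt' two_pos).mpr (by norm_num)
    linarith
  have hdev : ∀ x y, ‖F' x y - T y‖ ≤ δFT * ‖T y‖ := by
    rw [hδdef]
    exact norm_apply_sub_le_relDeviation_mul hF'B hc hT
  refine ⟨(1 - δFT) * c, B, mul_pos (by linarith) hc, hB, fun u w => ⟨?_, ?_⟩⟩
  · exact mul_norm_sub_le_norm_image_sub hF hT hδ1.le hdev u w
  · exact convex_univ.norm_image_sub_le_of_norm_hasFDerivWithin_le
      (fun x _ => (hF x).hasFDerivWithinAt) (fun x _ => hF'B x) (mem_univ w) (mem_univ u)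

/-- In Hilbert space setting, if `F` is continuously differentiable with
uniformly stable derivative and there is a bounded below linear operator `T` with
`δ_{F,T} := sup_{y≠0} sup_{z} ‖F'(z)y − Ty‖/‖Ty‖ < √2 − 1`, then `F` is bi-Lipschitz. -/
theorem bilipschitz_of_deltaFT_lt_sqrt_two_sub_one
    {H1 H2 : Type*} [NormedAddCommGroup H1] [InnerProductSpace ℝ H1] [CompleteSpace H1]
    [NormedAddCommGroup H2] [InnerProductSpace ℝ H2] [CompleteSpace H2]
    (F : H1 → H2) (F' : H1 → H1 →L[ℝ] H2)
    (hF : ∀ x : H1, HasFDerivAt F (F' x) x)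
    (hF'cont : Continuous F')
    (A B : ℝ) (hA : 0 < A) (hB : 0 < B)
    (hstab : ∀ x y : H1, A * ‖y‖ ≤ ‖F' x y‖ ∧ ‖F' x y‖ ≤ B * ‖y‖)
    (T : H1 →L[ℝ] H2)
    (hTbb : ∃ c > 0, ∀ y : H1, c * ‖y‖ ≤ ‖T y‖)
    (δFT : ℝ)
    (hδdef : δFT = ⨆ y : {y : H1 // y ≠ 0}, ⨆ z : H1, ‖F' z (y : H1) - T (y : H1)‖ / ‖T (y : H1)‖)
    (hδ : δFT < Real.sqrt 2 - 1) :
    ∃ A' B' : ℝ, 0 < A' ∧ 0 < B' ∧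
      ∀ u w : H1, A' * ‖u - w‖ ≤ ‖F u - F w‖ ∧ ‖F u - F w‖ ≤ B' * ‖u - w‖ :=
  bilipschitz_of_deltaFT_lt_sqrt_two_sub_one_general F F' hF A B hB hstab T hTbb δFT hδdef hδ
end

section
/- Let H1 and H2 be Hilbert spaces, F : H1 → H2 a continuously differentiable map whose derivative is uniformly stable, and T ∈ B(H1,H2) bounded below with β_{F,T} := sup_{0≠v∈H1} sup_{u∈H1} ‖F'(u)v/‖F'(u)v‖ − Tv/‖Tv‖‖ < √2. Set m_T := inf_{‖u‖=1} ‖Tu‖ and m_F := inf_{v∈H1} inf_{‖u‖=1} ‖F'(v)u‖. Then for all v₁, v₂ ∈ H1: ⟨v₁ − v₂, T*F(v₁) − T*F(v₂)⟩ ≥ ((2 − β_{F,T}²)/2)·m_T·m_F·‖v₁ − v₂‖², where T* denotes the Hilbert-space adjoint of T. In particular the map T*F is strictly monotonic. -/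
/-!
With `w = v₁ - v₂`, the pairing `⟪w, T* F v₁ - T* F v₂⟫ = ⟪T w, F v₁ - F v₂⟫` is, by the mean
value theorem along the segment, bounded below by the infimum over `u` of `⟪T w, F'(u) w⟫`.
Since `⟪x, y⟫ = ‖x‖ ‖y‖ (1 - ‖x/‖x‖ - y/‖y‖‖² / 2)`, directions of `F'(u) w` and `T w` at distance
at most `β < √2` give `⟪T w, F'(u) w⟫ ≥ (1 - β²/2) ‖F'(u) w‖ ‖T w‖ ≥ (1 - β²/2) m_F m_T ‖w‖²`.
The upper bound is Cauchy–Schwarz together with the Lipschitz bound `‖F'‖ ≤ B`.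
-/

open scoped RealInnerProductSpace

namespace NormedSpace

variable {E : Type*} [NormedAddCommGroup E] [InnerProductSpace ℝ E]

lemma norm_normalize_le_one (x : E) : ‖normalize x‖ ≤ 1 := by
  rcases eq_or_ne x 0 with rfl | hx
  · simp
  · exact (norm_normalize hx).le

lemma norm_normalize_sub_normalize_le_two (x y : E) : ‖normalize x - normalize y‖ ≤ 2 :=
  calc ‖normalize x - normalize y‖ ≤ ‖normalize x‖ + ‖normalize y‖ := norm_sub_le _ _
    _ ≤ 2 := by linarith [norm_normalize_le_one x, norm_normalize_le_one y]

lemma real_inner_eq_norm_mul_norm_mul_one_sub (x y : E) :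
    ⟪x, y⟫ = ‖x‖ * ‖y‖ * (1 - ‖normalize x - normalize y‖ ^ 2 / 2) := by
  rcases eq_or_ne x 0 with rfl | hx
  · simp
  rcases eq_or_ne y 0 with rfl | hy
  · simp
  have hdist := norm_sub_sq_real (normalize x) (normalize y)
  have hinner : ⟪normalize x, normalize y⟫ = (‖x‖ * ‖y‖)⁻¹ * ⟪x, y⟫ := by
    simp only [normalize, real_inner_smul_left, real_inner_smul_right]
    ring
  rw [hdist, norm_normalize hx, norm_normalize hy, hinner]
  field_simp
  ring

lemma mul_le_real_inner_of_norm_normalize_sub_le {x y : E} {a b β : ℝ} (ha : 0 ≤ a) (hb : 0 ≤ b)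
    (hβ : β ^ 2 ≤ 2) (hx : a ≤ ‖x‖) (hy : b ≤ ‖y‖) (hxy : ‖normalize x - normalize y‖ ≤ β) :
    (1 - β ^ 2 / 2) * (a * b) ≤ ⟪x, y⟫ := by
  have hsq : ‖normalize x - normalize y‖ ^ 2 ≤ β ^ 2 := pow_le_pow_left₀ (norm_nonneg _) hxy 2
  rw [real_inner_eq_norm_mul_norm_mul_one_sub, mul_comm (‖x‖ * ‖y‖)]
  exact mul_le_mul (by linarith) (mul_le_mul hx hy hb (norm_nonneg _)) (by positivity)
    (by linarith)

end NormedSpace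

lemma le_ciSup_ciSup_of_le {ι κ : Type*} {f : ι → κ → ℝ} {C : ℝ} (hf : ∀ i j, f i j ≤ C)
    (i : ι) (j : κ) : f i j ≤ ⨆ i, ⨆ j, f i j :=
  le_ciSup₂ (f := f) ⟨C, by
    simp only [mem_upperBounds, Set.mem_iUnion, Set.mem_range, forall_exists_index]
    rintro _ i j rfl
    exact hf i j⟩ i j

lemma iInf_sphere_norm_mul_norm_le {E G : Type*} [NormedAddCommGroup E] [NormedSpace ℝ E]
    [SeminormedAddCommGroup G] [NormedSpace ℝ G] (L : E →L[ℝ] G) (w : E) :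
    (⨅ u : {u : E // ‖u‖ = 1}, ‖L u‖) * ‖w‖ ≤ ‖L w‖ := by
  rcases eq_or_ne w 0 with rfl | hw
  · simp
  have hle : (⨅ u : {u : E // ‖u‖ = 1}, ‖L u‖) ≤ ‖L (NormedSpace.normalize w)‖ :=
    ciInf_le (f := fun u : {u : E // ‖u‖ = 1} => ‖L u‖)
      ⟨0, by rintro _ ⟨u, rfl⟩; exact norm_nonneg _⟩ ⟨_, NormedSpace.norm_normalize hw⟩
  rwa [NormedSpace.normalize, map_smul, norm_smul, norm_inv, norm_norm, inv_mul_eq_div,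
    le_div_iff₀ (norm_pos_iff.mpr hw)] at hle

section MeanValue

variable {E G : Type*} [NormedAddCommGroup E] [NormedSpace ℝ E]
  [NormedAddCommGroup G] [InnerProductSpace ℝ G] {F : E → G} {F' : E → E →L[ℝ] G}

lemma le_real_inner_sub_of_le_real_inner_fderiv (hF : ∀ x, HasFDerivAt F (F' x) x)
    {y : G} {v w : E} {C : ℝ} (hC : ∀ u, C ≤ ⟪y, F' u w⟫) : C ≤ ⟪y, F (v + w) - F v⟫ := by
  set g : ℝ → ℝ := fun t => ⟪y, F (v + t • w)⟫
  have hg : ∀ t, HasDerivAt g ⟪y, F' (v + t • w) w⟫ t := fun t =>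
    (innerSL ℝ y).hasFDerivAt.comp_hasDerivAt t <| (hF _).comp_hasDerivAt t <| by
      simpa using ((hasDerivAt_id t).smul_const w).const_add v
  have hmvt := mul_sub_le_image_sub_of_le_deriv (fun t => (hg t).differentiableAt)
    (fun t => (hg t).deriv ▸ hC _) zero_le_one
  simpa [g, inner_sub_right] using hmvt

lemma real_inner_map_sub_le (hF : ∀ x, HasFDerivAt F (F' x) x) {B : ℝ} (hB : ∀ x, ‖F' x‖ ≤ B)
    (L : E →L[ℝ] G) (u v : E) : ⟪L (u - v), F u - F v⟫ ≤ ‖L‖ * B * ‖u - v‖ ^ 2 := by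
  have hLip : ‖F u - F v‖ ≤ B * ‖u - v‖ :=
    convex_univ.norm_image_sub_le_of_norm_hasFDerivWithin_le
      (fun x _ => (hF x).hasFDerivWithinAt) (fun x _ => hB x) (Set.mem_univ v) (Set.mem_univ u)
  calc ⟪L (u - v), F u - F v⟫ ≤ ‖L (u - v)‖ * ‖F u - F v‖ := real_inner_le_norm _ _
    _ ≤ ‖L‖ * ‖u - v‖ * (B * ‖u - v‖) :=
        mul_le_mul (L.le_opNorm _) hLip (norm_nonneg _) (by positivity)
    _ = ‖L‖ * B * ‖u - v‖ ^ 2 := by ring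

end MeanValue

section Adjoint

variable {H1 H2 : Type*} [NormedAddCommGroup H1] [InnerProductSpace ℝ H1] [CompleteSpace H1]
  [NormedAddCommGroup H2] [InnerProductSpace ℝ H2] [CompleteSpace H2]

lemma real_inner_adjoint_sub (T : H1 →L[ℝ] H2) (w : H1) (x y : H2) :
    ⟪w, ContinuousLinearMap.adjoint T x - ContinuousLinearMap.adjoint T y⟫ = ⟪T w, x - y⟫ := by
  rw [← map_sub, ContinuousLinearMap.adjoint_inner_right]

theorem mul_norm_sq_le_real_inner_adjoint_comp_sub {F : H1 → H2} {F' : H1 → H1 →L[ℝ] H2}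
    (hF : ∀ x, HasFDerivAt F (F' x) x) (T : H1 →L[ℝ] H2) {a b β : ℝ} (ha : 0 ≤ a) (hb : 0 ≤ b)
    (hβ : β ^ 2 ≤ 2) (hT : ∀ w, a * ‖w‖ ≤ ‖T w‖) (hF' : ∀ u w, b * ‖w‖ ≤ ‖F' u w‖)
    (hdir : ∀ u w, ‖NormedSpace.normalize (F' u w) - NormedSpace.normalize (T w)‖ ≤ β)
    (v₁ v₂ : H1) :
    (2 - β ^ 2) / 2 * a * b * ‖v₁ - v₂‖ ^ 2 ≤
      ⟪v₁ - v₂, ContinuousLinearMap.adjoint T (F v₁) - ContinuousLinearMap.adjoint T (F v₂)⟫ := by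
  set w := v₁ - v₂
  have hpair : ∀ u, (2 - β ^ 2) / 2 * a * b * ‖w‖ ^ 2 ≤ ⟪T w, F' u w⟫ := fun u =>
    calc (2 - β ^ 2) / 2 * a * b * ‖w‖ ^ 2 = (1 - β ^ 2 / 2) * (b * ‖w‖ * (a * ‖w‖)) := by ring
      _ ≤ ⟪F' u w, T w⟫ := NormedSpace.mul_le_real_inner_of_norm_normalize_sub_le (by positivity)
          (by positivity) hβ (hF' u w) (hT w) (hdir u w)
      _ = ⟪T w, F' u w⟫ := real_inner_comm _ _
  have hmvt := le_real_inner_sub_of_le_real_inner_fderiv hF (v := v₂) hpair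
  rwa [add_sub_cancel, ← real_inner_adjoint_sub] at hmvt

end Adjoint

theorem adjoint_comp_strictly_monotonic_general
    {H1 H2 : Type*} [NormedAddCommGroup H1] [InnerProductSpace ℝ H1] [CompleteSpace H1]
    [NormedAddCommGroup H2] [InnerProductSpace ℝ H2] [CompleteSpace H2]
    (F : H1 → H2) (F' : H1 → H1 →L[ℝ] H2)
    (hF : ∀ x : H1, HasFDerivAt F (F' x) x)
    (A B : ℝ) (hA : 0 < A) (hB : 0 < B)
    (hstab : ∀ x y : H1, A * ‖y‖ ≤ ‖F' x y‖ ∧ ‖F' x y‖ ≤ B * ‖y‖)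
    (T : H1 →L[ℝ] H2)
    (hTbb : ∃ c > 0, ∀ y : H1, c * ‖y‖ ≤ ‖T y‖)
    (βFT mT mF : ℝ)
    (hβdef : βFT = ⨆ v : {v : H1 // v ≠ 0}, ⨆ u : H1,
        ‖(‖F' u (v : H1)‖)⁻¹ • F' u (v : H1) - (‖T (v : H1)‖)⁻¹ • T (v : H1)‖)
    (hβ : βFT < Real.sqrt 2)
    (hmT : mT = ⨅ u : {u : H1 // ‖u‖ = 1}, ‖T (u : H1)‖)
    (hmF : mF = ⨅ v : H1, ⨅ u : {u : H1 // ‖u‖ = 1}, ‖F' v (u : H1)‖) :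
    (∀ v₁ v₂ : H1,
      (2 - βFT ^ 2) / 2 * mT * mF * ‖v₁ - v₂‖ ^ 2 ≤
        ⟪v₁ - v₂, (ContinuousLinearMap.adjoint T) (F v₁) - (ContinuousLinearMap.adjoint T) (F v₂)⟫) ∧
    ∃ m M : ℝ, 0 < m ∧ 0 < M ∧ ∀ u v : H1,
      m * ‖u - v‖ ^ 2 ≤
          ⟪u - v, (ContinuousLinearMap.adjoint T) (F u) - (ContinuousLinearMap.adjoint T) (F v)⟫ ∧
      ⟪u - v, (ContinuousLinearMap.adjoint T) (F u) - (ContinuousLinearMap.adjoint T) (F v)⟫ ≤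
          M * ‖u - v‖ ^ 2 := by
  obtain ⟨c, hc, hcT⟩ := hTbb
  have hβ0 : 0 ≤ βFT := hβdef ▸ Real.iSup_nonneg fun _ => Real.iSup_nonneg fun _ => norm_nonneg _
  have hβ2 : βFT ^ 2 < 2 := (Real.lt_sqrt hβ0).1 hβ
  have hdir : ∀ u w, ‖NormedSpace.normalize (F' u w) - NormedSpace.normalize (T w)‖ ≤ βFT := by
    intro u w
    rcases eq_or_ne w 0 with rfl | hw
    · simpa using hβ0
    · rw [hβdef]
      exact le_ciSup_ciSup_of_le (fun (v : {v : H1 // v ≠ 0}) u =>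
        NormedSpace.norm_normalize_sub_normalize_le_two (F' u v) (T v)) ⟨w, hw⟩ u
  have hmT' : ∀ w, mT * ‖w‖ ≤ ‖T w‖ := hmT ▸ iInf_sphere_norm_mul_norm_le T
  have hmF' : ∀ u w, mF * ‖w‖ ≤ ‖F' u w‖ := fun u w =>
    le_trans (mul_le_mul_of_nonneg_right (hmF ▸ ciInf_le ⟨0, by
        rintro _ ⟨v, rfl⟩; exact Real.iInf_nonneg fun _ => norm_nonneg _⟩ u) (norm_nonneg w))
      (iInf_sphere_norm_mul_norm_le (F' u) w)
  have hF'B : ∀ x, ‖F' x‖ ≤ B := fun x => (F' x).opNorm_le_bound hB.le fun y => (hstab x y).2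
  -- `m` uses `c` and `A` rather than `mT` and `mF`: on `H1 = 0` the sphere is empty and the
  -- infima take the junk value `0`.
  refine ⟨mul_norm_sq_le_real_inner_adjoint_comp_sub hF T
      (hmT ▸ Real.iInf_nonneg fun _ => norm_nonneg _)
      (hmF ▸ Real.iInf_nonneg fun _ => Real.iInf_nonneg fun _ => norm_nonneg _)
      hβ2.le hmT' hmF' hdir,
    (2 - βFT ^ 2) / 2 * c * A, ‖T‖ * B + 1, by nlinarith [mul_pos hc hA], by positivity,
    fun u v => ⟨mul_norm_sq_le_real_inner_adjoint_comp_sub hF T hc.le hA.le hβ2.le hcT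
      (fun x y => (hstab x y).1) hdir u v, ?_⟩⟩
  rw [real_inner_adjoint_sub]
  exact (real_inner_map_sub_le hF hF'B T u v).trans (by nlinarith [sq_nonneg ‖u - v‖])

/-- In Hilbert space setting, for `F` continuously differentiable with uniformly
stable derivative and `T` bounded below with `β_{F,T} < √2`, the map `T*∘F` satisfies
`⟨v₁−v₂, T*F(v₁)−T*F(v₂)⟩ ≥ ((2−β²)/2)·m_T·m_F·‖v₁−v₂‖²`, where `m_T = inf_{‖u‖=1} ‖Tu‖` and
`m_F = inf_v inf_{‖u‖=1} ‖F'(v)u‖`; in particular `T*∘F` is strictly monotonic. -/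
theorem adjoint_comp_strictly_monotonic
    {H1 H2 : Type*} [NormedAddCommGroup H1] [InnerProductSpace ℝ H1] [CompleteSpace H1]
    [NormedAddCommGroup H2] [InnerProductSpace ℝ H2] [CompleteSpace H2]
    (F : H1 → H2) (F' : H1 → H1 →L[ℝ] H2)
    (hF : ∀ x : H1, HasFDerivAt F (F' x) x)
    (hF'cont : Continuous F')
    (A B : ℝ) (hA : 0 < A) (hB : 0 < B)
    (hstab : ∀ x y : H1, A * ‖y‖ ≤ ‖F' x y‖ ∧ ‖F' x y‖ ≤ B * ‖y‖)
    (T : H1 →L[ℝ] H2)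
    (hTbb : ∃ c > 0, ∀ y : H1, c * ‖y‖ ≤ ‖T y‖)
    (βFT mT mF : ℝ)
    (hβdef : βFT = ⨆ v : {v : H1 // v ≠ 0}, ⨆ u : H1,
        ‖(‖F' u (v : H1)‖)⁻¹ • F' u (v : H1) - (‖T (v : H1)‖)⁻¹ • T (v : H1)‖)
    (hβ : βFT < Real.sqrt 2)
    (hmT : mT = ⨅ u : {u : H1 // ‖u‖ = 1}, ‖T (u : H1)‖)
    (hmF : mF = ⨅ v : H1, ⨅ u : {u : H1 // ‖u‖ = 1}, ‖F' v (u : H1)‖) :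
    (∀ v₁ v₂ : H1,
      (2 - βFT ^ 2) / 2 * mT * mF * ‖v₁ - v₂‖ ^ 2 ≤
        ⟪v₁ - v₂, (ContinuousLinearMap.adjoint T) (F v₁) - (ContinuousLinearMap.adjoint T) (F v₂)⟫) ∧
    ∃ m M : ℝ, 0 < m ∧ 0 < M ∧ ∀ u v : H1,
      m * ‖u - v‖ ^ 2 ≤
          ⟪u - v, (ContinuousLinearMap.adjoint T) (F u) - (ContinuousLinearMap.adjoint T) (F v)⟫ ∧
      ⟪u - v, (ContinuousLinearMap.adjoint T) (F u) - (ContinuousLinearMap.adjoint T) (F v)⟫ ≤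
          M * ‖u - v‖ ^ 2 :=
  adjoint_comp_strictly_monotonic_general F F' hF A B hA hB hstab T hTbb βFT mT mF hβdef hβ hmT hmF
end

section
/- Let 𝒜 be a unital Banach algebra with norm ‖·‖, let θ ∈ (0,1], D > 0, and let p : 𝒜 → [0,∞) be a submultiplicative function (p(ST) ≤ p(S)p(T) for all S, T ∈ 𝒜) such that ‖T₁T₂‖ ≤ D‖T₁‖‖T₂‖((p(T₁)/‖T₁‖)^θ + (p(T₂)/‖T₂‖)^θ) for all nonzero T₁, T₂ ∈ 𝒜. Let (Tₙ)_{n≥1} be a sequence in 𝒜 and r ∈ [0,1), M > 0 with p(Tₙ) ≤ r and ‖Tₙ‖ ≤ M for all n ≥ 1. Then for every r₁ ∈ (r,1) there exists a constant C > 0 such that sup_{l≥1} ‖T_{l+n−1}T_{l+n−2}⋯T_l‖ ≤ C·r₁ⁿ for all n ≥ 1. -/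
/-! Let `a_k` bound the norms of all products of `2 ^ k` consecutive factors. Such products have
`p ≤ r ^ 2 ^ k`, so the differential inequality gives `a_{k+1} ≤ 2D a_k² (r ^ 2 ^ k / a_k) ^ θ`.
While `a_k ≥ r₁ ^ 2 ^ k` this is at most `2D a_k² q ^ 2 ^ k` with `q = (r / r₁) ^ θ < 1`, whose
solution `(2DM q^(k/2)) ^ 2 ^ k / (2D)` is `dyadicBound`; it eventually drops below `r₁ ^ 2 ^ k`,
and once a single block length `N` has all products of norm `≤ r₁ ^ N`, submultiplicativity of the
norm gives `C r₁ ^ n` for every length `n`. -/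

open Filter Topology

def descProd {A : Type*} [Monoid A] (T : ℕ → A) (l n : ℕ) : A :=
  ((List.range n).map fun k => T (l + k)).reverse.prod

section descProd

variable {A : Type*} [Monoid A] (T : ℕ → A)

theorem descProd_add (l n m : ℕ) :
    descProd T l (n + m) = descProd T (l + n) m * descProd T l n := by
  simp only [descProd, List.range_add, List.map_append, List.reverse_append, List.prod_append,
    List.map_map, Function.comp_def, Nat.add_assoc]

theorem descProd_one (l : ℕ) : descProd T l 1 = T l := by
  simp [descProd]

theorem descProd_add_left (j l n : ℕ) :
    descProd T (l + j) n = descProd (fun k => T (k + j)) l n := by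
  simp only [descProd, Nat.add_right_comm]

theorem apply_descProd_le_pow {f : A → ℝ} {b : ℝ} (hf0 : ∀ x, 0 ≤ f x)
    (hfmul : ∀ x y, f (x * y) ≤ f x * f y) (hT : ∀ k, f (T k) ≤ b) {n : ℕ} (hn : n ≠ 0)
    (l : ℕ) : f (descProd T l n) ≤ b ^ n := by
  induction n, Nat.one_le_iff_ne_zero.mpr hn using Nat.le_induction with
  | base => simpa [descProd_one] using hT l
  | succ n hn ih =>
    rw [descProd_add, descProd_one, pow_succ']
    exact (hfmul _ _).trans <|
      mul_le_mul (hT _) (ih (by omega)) (hf0 _) ((hf0 (T l)).trans (hT l))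

end descProd

theorem mul_div_rpow_le_mul_div_rpow {θ x y a b : ℝ} (hθ0 : 0 ≤ θ) (hθ1 : θ ≤ 1) (hx : 0 < x)
    (hxa : x ≤ a) (hy : 0 ≤ y) (hyb : y ≤ b) : x * (y / x) ^ θ ≤ a * (b / a) ^ θ := by
  have ha : 0 < a := hx.trans_le hxa
  have hsplit : ∀ {z w : ℝ}, 0 < z → 0 ≤ w → z * (w / z) ^ θ = z ^ (1 - θ) * w ^ θ := by
    intro z w hz hw
    rw [Real.div_rpow hw hz.le, Real.rpow_sub hz, Real.rpow_one]
    field_simp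
  rw [hsplit hx hy, hsplit ha (hy.trans hyb)]
  gcongr

noncomputable def dyadicBound (E c σ : ℝ) (k : ℕ) : ℝ :=
  (c * σ ^ k) ^ 2 ^ k / E

theorem mul_dyadicBound_sq_mul_le {E c σ Q : ℝ} (hE : 0 < E) (hQ0 : 0 ≤ Q) (hQ : Q ≤ σ ^ 2)
    (k : ℕ) : E * dyadicBound E c σ k ^ 2 * Q ^ 2 ^ k ≤ dyadicBound E c σ (k + 1) := by
  unfold dyadicBound
  have hsucc : (c * σ ^ (k + 1)) ^ 2 ^ (k + 1) = ((c * σ ^ k) ^ 2 ^ k) ^ 2 * (σ ^ 2) ^ 2 ^ k := by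
    rw [pow_succ 2 k, pow_succ σ k]; ring
  rw [hsucc, div_pow, mul_div_assoc', sq E, mul_div_mul_left _ _ hE.ne', div_mul_eq_mul_div]
  gcongr

theorem exists_dyadicBound_le_pow {E c σ ρ : ℝ} (hE : 0 < E) (hc : 0 ≤ c) (hσ0 : 0 ≤ σ)
    (hσ1 : σ < 1) (hρ : 0 < ρ) : ∃ k : ℕ, dyadicBound E c σ k ≤ ρ ^ 2 ^ k := by
  set ε := min 1 E
  have hε : 0 < ε := lt_min one_pos hE
  have hlim : Tendsto (fun k : ℕ => c * σ ^ k) atTop (𝓝 0) := by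
    simpa using (tendsto_pow_atTop_nhds_zero_of_lt_one hσ0 hσ1).const_mul c
  obtain ⟨k, hk⟩ := (hlim.eventually (ge_mem_nhds (mul_pos hε hρ))).exists
  refine ⟨k, (div_le_iff₀ hE).mpr ?_⟩
  calc (c * σ ^ k) ^ 2 ^ k ≤ (ε * ρ) ^ 2 ^ k := by gcongr
    _ = ε ^ 2 ^ k * ρ ^ 2 ^ k := mul_pow _ _ _
    _ ≤ ε * ρ ^ 2 ^ k := by
      gcongr
      exact pow_le_of_le_one hε.le (min_le_left _ _) (by positivity)
    _ ≤ ρ ^ 2 ^ k * E := by rw [mul_comm]; gcongr; exact min_le_right _ _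

section Differential

variable {𝒜 : Type*} [NormedRing 𝒜] {p : 𝒜 → ℝ} {θ D : ℝ}

theorem norm_mul_le_of_differential (hp0 : ∀ S : 𝒜, 0 ≤ p S) (hθ0 : 0 ≤ θ) (hθ1 : θ ≤ 1)
    (hD : 0 ≤ D) (hdiff : ∀ T₁ T₂ : 𝒜, T₁ ≠ 0 → T₂ ≠ 0 →
      ‖T₁ * T₂‖ ≤ D * ‖T₁‖ * ‖T₂‖ * ((p T₁ / ‖T₁‖) ^ θ + (p T₂ / ‖T₂‖) ^ θ))
    {X Y : 𝒜} {a b : ℝ} (hXa : ‖X‖ ≤ a) (hYa : ‖Y‖ ≤ a) (hXb : p X ≤ b) (hYb : p Y ≤ b) :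
    ‖X * Y‖ ≤ 2 * D * a ^ 2 * (b / a) ^ θ := by
  have ha : 0 ≤ a := (norm_nonneg X).trans hXa
  have hb : 0 ≤ b := (hp0 X).trans hXb
  rcases eq_or_ne X 0 with rfl | hX
  · simp only [zero_mul, norm_zero]; positivity
  rcases eq_or_ne Y 0 with rfl | hY
  · simp only [mul_zero, norm_zero]; positivity
  have hXθ := mul_div_rpow_le_mul_div_rpow hθ0 hθ1 (norm_pos_iff.mpr hX) hXa (hp0 X) hXb
  have hYθ := mul_div_rpow_le_mul_div_rpow hθ0 hθ1 (norm_pos_iff.mpr hY) hYa (hp0 Y) hYb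
  calc ‖X * Y‖ ≤ D * ‖X‖ * ‖Y‖ * ((p X / ‖X‖) ^ θ + (p Y / ‖Y‖) ^ θ) := hdiff X Y hX hY
    _ = D * (‖Y‖ * (‖X‖ * (p X / ‖X‖) ^ θ) + ‖X‖ * (‖Y‖ * (p Y / ‖Y‖) ^ θ)) := by ring
    _ ≤ D * (a * (a * (b / a) ^ θ) + a * (a * (b / a) ^ θ)) := by
      gcongr <;>
        exact mul_nonneg (norm_nonneg _) (Real.rpow_nonneg (div_nonneg (hp0 _) (norm_nonneg _)) _)
    _ = 2 * D * a ^ 2 * (b / a) ^ θ := by ring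

theorem norm_descProd_two_pow_le (hp0 : ∀ S : 𝒜, 0 ≤ p S)
    (hpmul : ∀ S T : 𝒜, p (S * T) ≤ p S * p T) (hθ0 : 0 < θ) (hθ1 : θ ≤ 1) (hD : 0 < D)
    (hdiff : ∀ T₁ T₂ : 𝒜, T₁ ≠ 0 → T₂ ≠ 0 →
      ‖T₁ * T₂‖ ≤ D * ‖T₁‖ * ‖T₂‖ * ((p T₁ / ‖T₁‖) ^ θ + (p T₂ / ‖T₂‖) ^ θ))
    {T : ℕ → 𝒜} {r r₁ M σ : ℝ} (hr0 : 0 ≤ r) (hr₁ : 0 < r₁) (hσ : (r / r₁) ^ θ ≤ σ ^ 2)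
    (hpT : ∀ k, p (T k) ≤ r) (hTM : ∀ k, ‖T k‖ ≤ M) (k l : ℕ) :
    ‖descProd T l (2 ^ k)‖ ≤ max (r₁ ^ 2 ^ k) (dyadicBound (2 * D) (2 * D * M) σ k) := by
  induction k generalizing l with
  | zero =>
    refine le_max_of_le_right ?_
    rw [dyadicBound, pow_zero, pow_one, descProd_one, pow_zero, mul_one,
      mul_div_cancel_left₀ _ (by positivity)]
    exact hTM l
  | succ k ih =>
    set G := dyadicBound (2 * D) (2 * D * M) σ k
    have hpP (l : ℕ) : p (descProd T l (2 ^ k)) ≤ r ^ 2 ^ k :=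
      apply_descProd_le_pow T hp0 hpmul hpT (by positivity) l
    have hsplit : descProd T l (2 ^ (k + 1)) =
        descProd T (l + 2 ^ k) (2 ^ k) * descProd T l (2 ^ k) := by
      rw [← descProd_add, pow_succ, mul_two]
    rw [hsplit]
    rcases le_total G (r₁ ^ 2 ^ k) with hG | hG
    · simp only [max_eq_left hG] at ih
      refine le_max_of_le_left ?_
      calc _ ≤ _ := norm_mul_le _ _
        _ ≤ r₁ ^ 2 ^ k * r₁ ^ 2 ^ k := by gcongr <;> exact ih _
        _ = r₁ ^ 2 ^ (k + 1) := by rw [← pow_add, pow_succ, mul_two]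
    · have hG0 : 0 < G := (pow_pos hr₁ _).trans_le hG
      simp only [max_eq_right hG] at ih
      refine le_max_of_le_right ?_
      calc _ ≤ 2 * D * G ^ 2 * (r ^ 2 ^ k / G) ^ θ :=
            norm_mul_le_of_differential hp0 hθ0.le hθ1 hD.le hdiff (ih _) (ih _) (hpP _) (hpP _)
        _ ≤ 2 * D * G ^ 2 * (r ^ 2 ^ k / r₁ ^ 2 ^ k) ^ θ := by gcongr
        _ = 2 * D * G ^ 2 * ((r / r₁) ^ θ) ^ 2 ^ k := by
            rw [← div_pow, Real.rpow_pow_comm (div_nonneg hr0 hr₁.le)]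
        _ ≤ _ := mul_dyadicBound_sq_mul_le (by positivity) (by positivity) hσ k

theorem exists_norm_descProd_le_mul_pow {T : ℕ → 𝒜} {M ρ : ℝ} {N : ℕ} (hρ : 0 < ρ) (hN : N ≠ 0)
    (hTM : ∀ k, ‖T k‖ ≤ M) (hblock : ∀ l, ‖descProd T l N‖ ≤ ρ ^ N) :
    ∃ C > 0, ∀ n l, n ≠ 0 → ‖descProd T l n‖ ≤ C * ρ ^ n := by
  set K := max (M / ρ) 1
  have hM : 0 ≤ M := (norm_nonneg _).trans (hTM 0)
  refine ⟨K ^ N, by positivity, fun n => ?_⟩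
  induction n using Nat.strong_induction_on with
  | _ n ih =>
    intro l hn
    rcases le_or_gt n N with hnN | hNn
    · calc ‖descProd T l n‖ ≤ M ^ n := apply_descProd_le_pow T norm_nonneg norm_mul_le hTM hn l
        _ ≤ (K * ρ) ^ n := by
          gcongr
          rw [← div_le_iff₀ hρ]
          exact le_max_left _ _
        _ ≤ K ^ N * ρ ^ n := by
          rw [mul_pow]
          gcongr
          exact le_max_right _ _
    · obtain ⟨m, rfl⟩ := Nat.exists_eq_add_of_le hNn.le
      rw [descProd_add]
      calc _ ≤ ‖descProd T (l + N) m‖ * ‖descProd T l N‖ := norm_mul_le _ _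
        _ ≤ K ^ N * ρ ^ m * ρ ^ N := by gcongr; exacts [ih m (by omega) _ (by omega), hblock l]
        _ = K ^ N * ρ ^ (N + m) := by ring

end Differential

theorem differential_subalgebra_product_decay_general
    {𝒜 : Type*} [NormedRing 𝒜]
    (p : 𝒜 → ℝ) (hp0 : ∀ S : 𝒜, 0 ≤ p S)
    (hpmul : ∀ S T : 𝒜, p (S * T) ≤ p S * p T)
    (θ D : ℝ) (hθ0 : 0 < θ) (hθ1 : θ ≤ 1) (hD : 0 < D)
    (hdiff : ∀ T₁ T₂ : 𝒜, T₁ ≠ 0 → T₂ ≠ 0 →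
      ‖T₁ * T₂‖ ≤ D * ‖T₁‖ * ‖T₂‖ * ((p T₁ / ‖T₁‖) ^ θ + (p T₂ / ‖T₂‖) ^ θ))
    (T : ℕ → 𝒜) (r M : ℝ) (hr0 : 0 ≤ r) (hM : 0 < M)
    (hpT : ∀ n : ℕ, 1 ≤ n → p (T n) ≤ r)
    (hTM : ∀ n : ℕ, 1 ≤ n → ‖T n‖ ≤ M)
    (r₁ : ℝ) (hrr₁ : r < r₁) :
    ∃ C > 0, ∀ n l : ℕ, 1 ≤ n → 1 ≤ l →
      ‖(((List.range n).map fun k => T (l + k)).reverse).prod‖ ≤ C * r₁ ^ n := by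
  have hr₁ : 0 < r₁ := hr0.trans_lt hrr₁
  have hq : 0 ≤ r / r₁ := div_nonneg hr0 hr₁.le
  set σ := (r / r₁) ^ (θ / 2)
  have hσ : (r / r₁) ^ θ ≤ σ ^ 2 := by
    rw [← Real.rpow_natCast, ← Real.rpow_mul hq]; norm_num
  have hσ1 : σ < 1 := Real.rpow_lt_one hq ((div_lt_one hr₁).mpr hrr₁) (by positivity)
  obtain ⟨k, hk⟩ := exists_dyadicBound_le_pow (E := 2 * D) (c := 2 * D * M) (by positivity)
    (by positivity) (by positivity) hσ1 hr₁
  have hblock (l : ℕ) : ‖descProd (fun k => T (k + 1)) l (2 ^ k)‖ ≤ r₁ ^ 2 ^ k :=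
    (norm_descProd_two_pow_le hp0 hpmul hθ0 hθ1 hD hdiff hr0 hr₁ hσ (fun _ => hpT _ (by omega))
      (fun _ => hTM _ (by omega)) k l).trans (max_le le_rfl hk)
  obtain ⟨C, hC, hbound⟩ := exists_norm_descProd_le_mul_pow hr₁ (by positivity)
    (fun _ => hTM _ (by omega)) hblock
  refine ⟨C, hC, fun n l hn hl => ?_⟩
  obtain ⟨l, rfl⟩ := Nat.exists_eq_add_of_le' hl
  change ‖descProd T (l + 1) n‖ ≤ _
  rw [descProd_add_left]
  exact hbound n l (by omega)

/-- In a unital Banach algebra `𝒜` which is a differential subalgebra of order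
`θ ∈ (0,1]` with respect to a submultiplicative seminorm-like function `p`, any sequence `(Tₙ)`
with `p(Tₙ) ≤ r < 1` and `‖Tₙ‖ ≤ M` has products decaying exponentially: for every `r₁ ∈ (r,1)`
there is `C > 0` with `‖T_{l+n−1}·T_{l+n−2}⋯T_l‖ ≤ C·r₁ⁿ` for all `n, l ≥ 1`. -/
theorem differential_subalgebra_product_decay
    {𝒜 : Type*} [NormedRing 𝒜] [NormOneClass 𝒜] [CompleteSpace 𝒜]
    (p : 𝒜 → ℝ) (hp0 : ∀ S : 𝒜, 0 ≤ p S)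
    (hpmul : ∀ S T : 𝒜, p (S * T) ≤ p S * p T)
    (θ D : ℝ) (hθ0 : 0 < θ) (hθ1 : θ ≤ 1) (hD : 0 < D)
    (hdiff : ∀ T₁ T₂ : 𝒜, T₁ ≠ 0 → T₂ ≠ 0 →
      ‖T₁ * T₂‖ ≤ D * ‖T₁‖ * ‖T₂‖ * ((p T₁ / ‖T₁‖) ^ θ + (p T₂ / ‖T₂‖) ^ θ))
    (T : ℕ → 𝒜) (r M : ℝ) (hr0 : 0 ≤ r) (hr1 : r < 1) (hM : 0 < M)
    (hpT : ∀ n : ℕ, 1 ≤ n → p (T n) ≤ r)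
    (hTM : ∀ n : ℕ, 1 ≤ n → ‖T n‖ ≤ M)
    (r₁ : ℝ) (hrr₁ : r < r₁) (hr₁1 : r₁ < 1) :
    ∃ C > 0, ∀ n l : ℕ, 1 ≤ n → 1 ≤ l →
      ‖(((List.range n).map fun k => T (l + k)).reverse).prod‖ ≤ C * r₁ ^ n :=
  differential_subalgebra_product_decay_general p hp0 hpmul θ D hθ0 hθ1 hD hdiff T r M hr0 hM hpT
    hTM r₁ hrr₁
end

section
/- Let (A, M, H1) be a sparse approximation triple with constants s_A and a_A, let H2 be a Hilbert space, and let F : H1 → H2 be a continuous map with F(0) = 0 that has the sparse Riesz property with constants D, β > 0 (‖F(x)‖ ≥ D⁻¹(‖x‖_{H1} − β√a_A·σ_{A,M}(x)) for all x ∈ M) and the almost linear property with constants γ₁, γ₂ ≥ 0 (‖F(x)−F(y)−F(x−y)‖ ≤ γ₁‖x−y‖_{H1} + γ₂√a_A(σ_{A,M}(x) + σ_{A,M}(y)) for all x, y ∈ M). Assume γ₃ := 1 − 2Dγ₁ − (Dγ₁ + Dγ₂ + β)√(a_A s_A) > 0. Then for every x⁰ ∈ M and ε > 0, the solution x⁰_M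 := argmin{‖x̂‖_M : x̂ ∈ M, ‖F(x̂) − F(x⁰)‖ ≤ ε} satisfies ‖x⁰_M − x⁰‖_{H1} ≤ ((2 + 8Dγ₂ + 4β)/γ₃)·√a_A·σ_{A,M}(x⁰) + ((2 + √(a_A s_A))·D/γ₃)·ε and ‖x⁰_M − x⁰‖_M ≤ ((2 − 4Dγ₁ + 2(Dγ₁ + 2Dγ₂ + β)√(a_A s_A))/γ₃)·σ_{A,M}(x⁰) + (2D/γ₃)·√(s_A)·ε. -/
/-- A set-valued "best approximator": `y` is a best approximation of `x` in `K` (w.r.t. the norm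
of `M`). -/
def IsBestApprox {M : Type*} [NormedAddCommGroup M] (K : Set M) (x y : M) : Prop :=
  y ∈ K ∧ ∀ z ∈ K, ‖x - y‖ ≤ ‖x - z‖

/-- A sparse approximation triple `(A, M, H1)`: the Banach space `M` is continuously embedded
into the Hilbert space `H1` via `j` with embedding norm at most one, `A = ⋃ i, A_i` is a union of
closed linear subspaces, every nonempty closed subset of `M` is proximinal, best approximators
onto each `A_i` w.r.t. the `M`-norm are also best approximators w.r.t. the `H1`-norm, the norms
split along such best approximators, and `⋃_{k ≥ 1} kA` is dense in `H1`. -/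
structure SparseApproxTriple (H1 : Type*) [NormedAddCommGroup H1] [InnerProductSpace ℝ H1]
    (M : Type*) [NormedAddCommGroup M] [NormedSpace ℝ M] (I : Type*) where
  /-- the (injective, norm at most one) embedding of `M` into `H1` -/
  j : M →ₗ[ℝ] H1
  j_inj : Function.Injective j
  j_norm_le : ∀ x : M, ‖j x‖ ≤ ‖x‖
  /-- the subspaces whose union is `A` -/
  Asub : I → Submodule ℝ M
  index_nonempty : Nonempty I
  Asub_closed : ∀ i : I, IsClosed (Asub i : Set M)
  A_closed : IsClosed (⋃ i : I, (Asub i : Set M))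
  /-- proximinality: every nonempty closed subset of `M` is proximinal -/
  prox : ∀ K : Set M, K.Nonempty → IsClosed K → ∀ x : M, ∃ y ∈ K, ∀ z ∈ K, ‖x - y‖ ≤ ‖x - z‖
  /-- common best approximator property -/
  common_best : ∀ (i : I) (x y : M), y ∈ Asub i → (∀ z ∈ Asub i, ‖x - y‖ ≤ ‖x - z‖) →
    ∀ z ∈ Asub i, ‖j x - j y‖ ≤ ‖j x - j z‖
  /-- norm splitting in `M` -/
  norm_split_M : ∀ (i : I) (x y : M), y ∈ Asub i → (∀ z ∈ Asub i, ‖x - y‖ ≤ ‖x - z‖) →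
    ‖x‖ = ‖y‖ + ‖x - y‖
  /-- norm splitting in `H1` -/
  norm_split_H : ∀ (i : I) (x y : M), y ∈ Asub i → (∀ z ∈ Asub i, ‖x - y‖ ≤ ‖x - z‖) →
    ‖j x‖ ^ 2 = ‖j y‖ ^ 2 + ‖j x - j y‖ ^ 2
  /-- the embedding of `A` into `M` is bounded (so that the sparsity `s_A` is finite) -/
  sA_bddAbove : BddAbove
    {r : ℝ | ∃ x : M, x ∈ (⋃ i : I, (Asub i : Set M)) ∧ x ≠ 0 ∧ r = ‖x‖ / ‖j x‖}
  /-- sparse density: `⋃_{k ≥ 1} kA` is dense in `H1` -/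
  sparse_dense : Dense (⋃ k : ℕ, {u : H1 | ∃ f : Fin (k + 1) → M,
    (∀ n, f n ∈ ⋃ i : I, (Asub i : Set M)) ∧ u = ∑ n, j (f n)})

namespace SparseApproxTriple

variable {H1 : Type*} [NormedAddCommGroup H1] [InnerProductSpace ℝ H1]
  {M : Type*} [NormedAddCommGroup M] [NormedSpace ℝ M] {I : Type*}

/-- The union `A = ⋃ i, A_i`, as a subset of `M`. -/
def A (S : SparseApproxTriple H1 M I) : Set M := ⋃ i : I, (S.Asub i : Set M)

/-- `σ_{A,M}(x) := inf_{z ∈ A} ‖x − z‖_M`, the best sparse approximation error. -/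
noncomputable def sigma (S : SparseApproxTriple H1 M I) (x : M) : ℝ :=
  sInf ((fun z => ‖x - z‖) '' S.A)

/-- The sparsity `s_A := (sup_{0 ≠ x ∈ A} ‖x‖_M/‖x‖_{H1})²`. -/
noncomputable def sA (S : SparseApproxTriple H1 M I) : ℝ :=
  (sSup {r : ℝ | ∃ x : M, x ∈ S.A ∧ x ≠ 0 ∧ r = ‖x‖ / ‖S.j x‖}) ^ 2

/-- The sparse approximation ratio
`a_A := sup_{0 ≠ x ∈ M} (‖u_{A,M}‖_{H1}/‖x_{A,M}‖_M)²`, where `x_{A,M}` is a best approximator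
of `x` in `A` and `u_{A,M}` a best approximator of `x − x_{A,M}` in `A` (both w.r.t. the norm of
`M`). -/
noncomputable def aA (S : SparseApproxTriple H1 M I) : ℝ :=
  sSup {r : ℝ | ∃ x xa u : M, x ≠ 0 ∧ IsBestApprox S.A x xa ∧
    IsBestApprox S.A (x - xa) u ∧ r = (‖S.j u‖ / ‖xa‖) ^ 2}

/-- `kA := {x₁ + ⋯ + x_k : x₁, …, x_k ∈ A}`. -/
def sumSet (S : SparseApproxTriple H1 M I) (k : ℕ) : Set M :=
  {x : M | ∃ f : Fin k → M, (∀ n, f n ∈ S.A) ∧ x = ∑ n, f n}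

end SparseApproxTriple

/-!
The minimizer `xm` is compared with `x0` through a single index `i` such that a best approximator
`xa` of `x0` in `A` lies in `A_i`. Let `p` be a best approximator of `xm` in `A_i`. Best
approximation onto `A_i` is an orthogonal projection in `H1`, so `‖xa − p‖_{H1} ≤ ‖xm − x0‖_{H1}`,
and the sparsity bound turns this into `‖xa − p‖_M ≤ √s_A ‖xm − x0‖_{H1}`. Minimality of `‖xm‖_M`
and the splitting `‖xm‖_M = ‖p‖_M + ‖xm − p‖_M` then bound the tail `‖xm − p‖_M` by
`σ(x0) + √s_A ‖xm − x0‖_{H1}`, which controls `σ(xm)`, `σ(xm − x0)` and `‖xm − x0‖_M`. Feeding these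
into the sparse Riesz and almost linear properties gives
`γ₃ ‖xm − x0‖_{H1} ≤ D ε + 2 (D γ₂ + β) √a_A σ(x0)`, and both bounds follow.
-/

open scoped InnerProductSpace

theorem norm_sub_le_norm_sub_of_inner_eq_zero {E : Type*} [NormedAddCommGroup E]
    [InnerProductSpace ℝ E] {a b c d : E} (hab : ⟪a - b, b - d⟫_ℝ = 0)
    (hcd : ⟪c - d, b - d⟫_ℝ = 0) : ‖b - d‖ ≤ ‖a - c‖ := by
  have hsq : ‖b - d‖ ^ 2 ≤ ‖a - c‖ * ‖b - d‖ := by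
    have hdecomp : a - c = (a - b) + (b - d) - (c - d) := by abel
    calc ‖b - d‖ ^ 2 = ⟪a - c, b - d⟫_ℝ := by
          rw [hdecomp, inner_sub_left, inner_add_left, hab, hcd, real_inner_self_eq_norm_sq]
          ring
      _ ≤ ‖a - c‖ * ‖b - d‖ := real_inner_le_norm _ _
  nlinarith [norm_nonneg (b - d), norm_nonneg (a - c)]

namespace SparseApproxTriple

variable {H1 : Type*} [NormedAddCommGroup H1] [InnerProductSpace ℝ H1]
  {M : Type*} [NormedAddCommGroup M] [NormedSpace ℝ M] {I : Type*}
  (S : SparseApproxTriple H1 M I)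

theorem Asub_subset_A (i : I) : (S.Asub i : Set M) ⊆ S.A :=
  Set.subset_iUnion (fun k => (S.Asub k : Set M)) i

theorem sigma_nonneg (x : M) : 0 ≤ S.sigma x :=
  Real.sInf_nonneg (by rintro r ⟨z, -, rfl⟩; exact norm_nonneg _)

theorem sigma_le {x z : M} (hz : z ∈ S.A) : S.sigma x ≤ ‖x - z‖ :=
  csInf_le ⟨0, by rintro r ⟨w, -, rfl⟩; exact norm_nonneg _⟩ ⟨z, hz, rfl⟩

theorem sigma_eq_of_isBestApprox {x y : M} (h : IsBestApprox S.A x y) :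
    S.sigma x = ‖x - y‖ :=
  le_antisymm (S.sigma_le h.1)
    (le_csInf ⟨_, y, h.1, rfl⟩ (by rintro r ⟨z, hz, rfl⟩; exact h.2 z hz))

theorem aA_nonneg : 0 ≤ S.aA :=
  Real.sSup_nonneg (by rintro r ⟨x, xa, u, -, -, -, rfl⟩; positivity)

theorem norm_le_sqrt_sA_mul {y : M} (hy : y ∈ S.A) : ‖y‖ ≤ √S.sA * ‖S.j y‖ := by
  rcases eq_or_ne y 0 with rfl | hy0
  · simp
  have hjy : 0 < ‖S.j y‖ := norm_pos_iff.2 fun h => hy0 (S.j_inj (by rw [h, map_zero]))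
  have hle : ‖y‖ / ‖S.j y‖ ≤ sSup {r : ℝ | ∃ x : M, x ∈ S.A ∧ x ≠ 0 ∧ r = ‖x‖ / ‖S.j x‖} :=
    le_csSup S.sA_bddAbove ⟨y, hy, hy0, rfl⟩
  rw [sA, Real.sqrt_sq ((div_nonneg (norm_nonneg _) (norm_nonneg _)).trans hle),
    ← div_le_iff₀ hjy]
  exact hle

theorem exists_isBestApprox_A (x : M) : ∃ y, IsBestApprox S.A x y := by
  obtain ⟨i⟩ := S.index_nonempty
  exact S.prox S.A ⟨0, S.Asub_subset_A i (S.Asub i).zero_mem⟩ S.A_closed x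

theorem exists_isBestApprox_Asub (i : I) (x : M) :
    ∃ y, IsBestApprox (S.Asub i : Set M) x y :=
  S.prox _ ⟨0, (S.Asub i).zero_mem⟩ (S.Asub_closed i) x

theorem inner_eq_zero_of_isBestApprox {i : I} {x y z : M}
    (h : IsBestApprox (S.Asub i : Set M) x y) (hz : z ∈ S.Asub i) :
    ⟪S.j x - S.j y, S.j z⟫_ℝ = 0 := by
  let K := (S.Asub i).map S.j
  have hmin : ‖S.j x - S.j y‖ = ⨅ w : (K : Set H1), ‖S.j x - w‖ := by
    refine le_antisymm (le_ciInf ?_)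
      (ciInf_le ?_ (⟨S.j y, Submodule.mem_map_of_mem h.1⟩ : (K : Set H1)))
    · rintro ⟨_, z, hz, rfl⟩
      exact S.common_best i x y h.1 h.2 z hz
    · exact ⟨0, by rintro _ ⟨w, rfl⟩; exact norm_nonneg _⟩
  exact (K.norm_eq_iInf_iff_real_inner_eq_zero (Submodule.mem_map_of_mem h.1)).1 hmin _
    (Submodule.mem_map_of_mem hz)

theorem norm_map_sub_le_of_isBestApprox {i : I} {x x' y y' : M}
    (h : IsBestApprox (S.Asub i : Set M) x y) (h' : IsBestApprox (S.Asub i : Set M) x' y') :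
    ‖S.j y - S.j y'‖ ≤ ‖S.j x - S.j x'‖ := by
  have hyy' : y - y' ∈ S.Asub i := sub_mem h.1 h'.1
  refine norm_sub_le_norm_sub_of_inner_eq_zero ?_ ?_ <;> rw [← map_sub S.j y y']
  exacts [S.inner_eq_zero_of_isBestApprox h hyy', S.inner_eq_zero_of_isBestApprox h' hyy']

theorem exists_sparse_split_of_norm_le {x x0 : M} (hx : ‖x‖ ≤ ‖x0‖) :
    ∃ xa p : M, p ∈ S.A ∧ p - xa ∈ S.A ∧ ‖x0 - xa‖ = S.sigma x0 ∧
      ‖p - xa‖ ≤ √S.sA * ‖S.j x - S.j x0‖ ∧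
      ‖x - p‖ ≤ S.sigma x0 + √S.sA * ‖S.j x - S.j x0‖ := by
  obtain ⟨xa, hxa⟩ := S.exists_isBestApprox_A x0
  obtain ⟨i, hxa_i⟩ := Set.mem_iUnion.1 hxa.1
  have hxa' : IsBestApprox (S.Asub i : Set M) x0 xa :=
    ⟨hxa_i, fun z hz => hxa.2 z (S.Asub_subset_A i hz)⟩
  obtain ⟨p, hp⟩ := S.exists_isBestApprox_Asub i x
  have hpxa : p - xa ∈ S.A := S.Asub_subset_A i (sub_mem hp.1 hxa_i)
  have hproj : ‖p - xa‖ ≤ √S.sA * ‖S.j x - S.j x0‖ :=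
    calc ‖p - xa‖ ≤ √S.sA * ‖S.j (p - xa)‖ := S.norm_le_sqrt_sA_mul hpxa
      _ ≤ √S.sA * ‖S.j x - S.j x0‖ := by
        rw [map_sub]
        gcongr
        exact S.norm_map_sub_le_of_isBestApprox hp hxa'
  refine ⟨xa, p, S.Asub_subset_A i hp.1, hpxa, (S.sigma_eq_of_isBestApprox hxa).symm, hproj, ?_⟩
  have hsplit : ‖x‖ = ‖p‖ + ‖x - p‖ := S.norm_split_M i x p hp.1 hp.2
  rw [S.sigma_eq_of_isBestApprox hxa]
  linarith [norm_le_norm_add_norm_sub' x0 xa, norm_le_norm_add_norm_sub' xa p,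
    norm_sub_rev xa p]

theorem sigma_le_and_norm_sub_le_of_norm_le {x x0 : M} (hx : ‖x‖ ≤ ‖x0‖) :
    S.sigma x ≤ S.sigma x0 + √S.sA * ‖S.j x - S.j x0‖ ∧
      S.sigma (x - x0) ≤ 2 * S.sigma x0 + √S.sA * ‖S.j x - S.j x0‖ ∧
      ‖x - x0‖ ≤ 2 * S.sigma x0 + 2 * (√S.sA * ‖S.j x - S.j x0‖) := by
  obtain ⟨xa, p, hp, hpxa, hxa, hproj, htail⟩ := S.exists_sparse_split_of_norm_le hx
  have hdecomp : x - x0 - (p - xa) = (x - p) - (x0 - xa) := by abel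
  have hsparse : ‖x - x0 - (p - xa)‖ ≤ ‖x - p‖ + ‖x0 - xa‖ := hdecomp ▸ norm_sub_le _ _
  refine ⟨(S.sigma_le hp).trans htail, ?_, ?_⟩
  · linarith [S.sigma_le (x := x - x0) hpxa]
  · linarith [norm_le_norm_add_norm_sub' (x - x0) (p - xa)]

theorem norm_map_sub_le_of_sparseRiesz_of_almostLinear {H2 : Type*} [NormedAddCommGroup H2]
    (F : H1 → H2) {D β γ₁ γ₂ : ℝ} (hD : 0 < D)
    (hSRP : ∀ x : M, D⁻¹ * (‖S.j x‖ - β * √S.aA * S.sigma x) ≤ ‖F (S.j x)‖)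
    (hAL : ∀ x y : M, ‖F (S.j x) - F (S.j y) - F (S.j x - S.j y)‖ ≤
      γ₁ * ‖S.j x - S.j y‖ + γ₂ * √S.aA * (S.sigma x + S.sigma y))
    (x y : M) :
    ‖S.j x - S.j y‖ ≤ D * ‖F (S.j x) - F (S.j y)‖ +
      D * (γ₁ * ‖S.j x - S.j y‖ + γ₂ * √S.aA * (S.sigma x + S.sigma y)) +
      β * √S.aA * S.sigma (x - y) := by
  have hRiesz := hSRP (x - y)
  rw [map_sub, inv_mul_le_iff₀ hD] at hRiesz
  have hF : ‖F (S.j x - S.j y)‖ ≤ ‖F (S.j x) - F (S.j y)‖ +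
      (γ₁ * ‖S.j x - S.j y‖ + γ₂ * √S.aA * (S.sigma x + S.sigma y)) := by
    have htri := norm_sub_le (F (S.j x) - F (S.j y)) (F (S.j x) - F (S.j y) - F (S.j x - S.j y))
    rw [sub_sub_cancel] at htri
    linarith [hAL x y]
  linarith [mul_le_mul_of_nonneg_left hF hD.le]

end SparseApproxTriple

theorem suboptimal_bounds_of_estimates {D β γ₁ γ₂ a s ε σ₀ σ σd r m : ℝ} (hD : 0 ≤ D)
    (hβ : 0 ≤ β) (hγ₁ : 0 ≤ γ₁) (hγ₂ : 0 ≤ γ₂) (ha : 0 ≤ a) (hs : 0 ≤ s) (hε : 0 ≤ ε)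
    (hσ₀ : 0 ≤ σ₀) (hr₀ : 0 ≤ r) (hγ₃ : 0 < 1 - 2 * D * γ₁ - (D * γ₁ + D * γ₂ + β) * (a * s))
    (hr : r ≤ D * ε + D * (γ₁ * r + γ₂ * a * (σ + σ₀)) + β * a * σd)
    (hσ : σ ≤ σ₀ + s * r) (hσd : σd ≤ 2 * σ₀ + s * r) (hm : m ≤ 2 * σ₀ + 2 * (s * r)) :
    r ≤ (2 + 8 * D * γ₂ + 4 * β) / (1 - 2 * D * γ₁ - (D * γ₁ + D * γ₂ + β) * (a * s)) *
          a * σ₀ +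
        (2 + a * s) * D / (1 - 2 * D * γ₁ - (D * γ₁ + D * γ₂ + β) * (a * s)) * ε ∧
      m ≤ (2 - 4 * D * γ₁ + 2 * (D * γ₁ + 2 * D * γ₂ + β) * (a * s)) /
          (1 - 2 * D * γ₁ - (D * γ₁ + D * γ₂ + β) * (a * s)) * σ₀ +
        2 * D / (1 - 2 * D * γ₁ - (D * γ₁ + D * γ₂ + β) * (a * s)) * s * ε := by
  set γ₃ := 1 - 2 * D * γ₁ - (D * γ₁ + D * γ₂ + β) * (a * s)
  have hkey : γ₃ * r ≤ D * ε + 2 * (D * γ₂ + β) * a * σ₀ := by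
    have hDγ₂a : 0 ≤ D * γ₂ * a := by positivity
    have hβa : 0 ≤ β * a := by positivity
    linarith [mul_le_mul_of_nonneg_left hσ hDγ₂a, mul_le_mul_of_nonneg_left hσd hβa,
      mul_nonneg (mul_nonneg hD hγ₁) hr₀,
      mul_nonneg (mul_nonneg hD hγ₁) (mul_nonneg (mul_nonneg ha hs) hr₀)]
  simp only [div_mul_eq_mul_div, ← add_div]
  constructor
  · rw [le_div_iff₀ hγ₃]
    linarith [mul_nonneg ha hσ₀, mul_nonneg hD hε,
      mul_nonneg (mul_nonneg hD hγ₂) (mul_nonneg ha hσ₀),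
      mul_nonneg hβ (mul_nonneg ha hσ₀), mul_nonneg (mul_nonneg ha hs) (mul_nonneg hD hε)]
  · rw [le_div_iff₀ hγ₃]
    linarith [mul_le_mul_of_nonneg_right hm hγ₃.le,
      mul_le_mul_of_nonneg_left hkey (mul_nonneg zero_le_two hs),
      mul_nonneg (mul_nonneg hD hγ₁) (mul_nonneg (mul_nonneg ha hs) hσ₀),
      mul_nonneg (mul_nonneg hD hγ₂) (mul_nonneg (mul_nonneg ha hs) hσ₀)]

theorem sparse_optimization_suboptimal_general
    {H1 : Type*} [NormedAddCommGroup H1] [InnerProductSpace ℝ H1]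
    {H2 : Type*} [NormedAddCommGroup H2]
    {M : Type*} [NormedAddCommGroup M] [NormedSpace ℝ M]
    {I : Type*} (S : SparseApproxTriple H1 M I)
    (F : H1 → H2)
    (D β γ₁ γ₂ : ℝ) (hD : 0 < D) (hβ : 0 < β) (hγ₁ : 0 ≤ γ₁) (hγ₂ : 0 ≤ γ₂)
    (hSRP : ∀ x : M,
      D⁻¹ * (‖S.j x‖ - β * Real.sqrt S.aA * S.sigma x) ≤ ‖F (S.j x)‖)
    (hAL : ∀ x y : M,
      ‖F (S.j x) - F (S.j y) - F (S.j x - S.j y)‖ ≤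
        γ₁ * ‖S.j x - S.j y‖ + γ₂ * Real.sqrt S.aA * (S.sigma x + S.sigma y))
    (hγ₃ : 0 < 1 - 2 * D * γ₁ - (D * γ₁ + D * γ₂ + β) * Real.sqrt (S.aA * S.sA))
    (x0 : M) (ε : ℝ)
    (xm : M) (hfeas : ‖F (S.j xm) - F (S.j x0)‖ ≤ ε)
    (hmin : ∀ y : M, ‖F (S.j y) - F (S.j x0)‖ ≤ ε → ‖xm‖ ≤ ‖y‖) :
    ‖S.j xm - S.j x0‖ ≤
        (2 + 8 * D * γ₂ + 4 * β) /
            (1 - 2 * D * γ₁ - (D * γ₁ + D * γ₂ + β) * Real.sqrt (S.aA * S.sA)) *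
          Real.sqrt S.aA * S.sigma x0 +
        (2 + Real.sqrt (S.aA * S.sA)) * D /
            (1 - 2 * D * γ₁ - (D * γ₁ + D * γ₂ + β) * Real.sqrt (S.aA * S.sA)) * ε ∧
      ‖xm - x0‖ ≤
        (2 - 4 * D * γ₁ + 2 * (D * γ₁ + 2 * D * γ₂ + β) * Real.sqrt (S.aA * S.sA)) /
            (1 - 2 * D * γ₁ - (D * γ₁ + D * γ₂ + β) * Real.sqrt (S.aA * S.sA)) * S.sigma x0 +
        2 * D / (1 - 2 * D * γ₁ - (D * γ₁ + D * γ₂ + β) * Real.sqrt (S.aA * S.sA)) *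
          Real.sqrt S.sA * ε := by
  have hε : 0 ≤ ε := (norm_nonneg _).trans hfeas
  obtain ⟨hσ, hσd, hm⟩ := S.sigma_le_and_norm_sub_le_of_norm_le (hmin x0 (by simpa using hε))
  have hr := S.norm_map_sub_le_of_sparseRiesz_of_almostLinear F hD hSRP hAL xm x0
  rw [Real.sqrt_mul S.aA_nonneg] at hγ₃ ⊢
  exact suboptimal_bounds_of_estimates hD.le hβ.le hγ₁ hγ₂ (Real.sqrt_nonneg _)
    (Real.sqrt_nonneg _) hε (S.sigma_nonneg x0) (norm_nonneg _) hγ₃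
    (hr.trans (by gcongr)) hσ hσd hm

/-- For a sparse approximation triple `(A, M, H1)` and a continuous map
`F : H1 → H2` with `F(0) = 0` having the sparse Riesz property (constants `D, β > 0`) and the
almost linear property (constants `γ₁, γ₂ ≥ 0`) with
`γ₃ := 1 − 2Dγ₁ − (Dγ₁ + Dγ₂ + β)√(a_A s_A) > 0`, the minimizer `x⁰_M` of `‖·‖_M` over
`{x̂ : ‖F(x̂) − F(x⁰)‖ ≤ ε}` is a suboptimal approximation of `x⁰`. -/
theorem sparse_optimization_suboptimal
    {H1 : Type*} [NormedAddCommGroup H1] [InnerProductSpace ℝ H1] [CompleteSpace H1]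
    {H2 : Type*} [NormedAddCommGroup H2] [InnerProductSpace ℝ H2] [CompleteSpace H2]
    {M : Type*} [NormedAddCommGroup M] [NormedSpace ℝ M] [CompleteSpace M]
    {I : Type*} (S : SparseApproxTriple H1 M I)
    (F : H1 → H2) (hFcont : Continuous F) (hF0 : F 0 = 0)
    (D β γ₁ γ₂ : ℝ) (hD : 0 < D) (hβ : 0 < β) (hγ₁ : 0 ≤ γ₁) (hγ₂ : 0 ≤ γ₂)
    (hSRP : ∀ x : M,
      D⁻¹ * (‖S.j x‖ - β * Real.sqrt S.aA * S.sigma x) ≤ ‖F (S.j x)‖)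
    (hAL : ∀ x y : M,
      ‖F (S.j x) - F (S.j y) - F (S.j x - S.j y)‖ ≤
        γ₁ * ‖S.j x - S.j y‖ + γ₂ * Real.sqrt S.aA * (S.sigma x + S.sigma y))
    (hγ₃ : 0 < 1 - 2 * D * γ₁ - (D * γ₁ + D * γ₂ + β) * Real.sqrt (S.aA * S.sA))
    (x0 : M) (ε : ℝ) (hε : 0 < ε)
    (xm : M) (hfeas : ‖F (S.j xm) - F (S.j x0)‖ ≤ ε)
    (hmin : ∀ y : M, ‖F (S.j y) - F (S.j x0)‖ ≤ ε → ‖xm‖ ≤ ‖y‖) :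
    ‖S.j xm - S.j x0‖ ≤
        (2 + 8 * D * γ₂ + 4 * β) /
            (1 - 2 * D * γ₁ - (D * γ₁ + D * γ₂ + β) * Real.sqrt (S.aA * S.sA)) *
          Real.sqrt S.aA * S.sigma x0 +
        (2 + Real.sqrt (S.aA * S.sA)) * D /
            (1 - 2 * D * γ₁ - (D * γ₁ + D * γ₂ + β) * Real.sqrt (S.aA * S.sA)) * ε ∧
      ‖xm - x0‖ ≤
        (2 - 4 * D * γ₁ + 2 * (D * γ₁ + 2 * D * γ₂ + β) * Real.sqrt (S.aA * S.sA)) /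
            (1 - 2 * D * γ₁ - (D * γ₁ + D * γ₂ + β) * Real.sqrt (S.aA * S.sA)) * S.sigma x0 +
        2 * D / (1 - 2 * D * γ₁ - (D * γ₁ + D * γ₂ + β) * Real.sqrt (S.aA * S.sA)) *
          Real.sqrt S.sA * ε :=
  sparse_optimization_suboptimal_general S F D β γ₁ γ₂ hD hβ hγ₁ hγ₂ hSRP hAL hγ₃ x0 ε xm hfeas hmin
end

section
/- Let (A, M, H1) be a sparse approximation triple. For x ∈ M define the greedy sequence x⁰_{A,M} := 0 and x^{k+1}_{A,M} := x^k_{A,M} + argmin_{ẑ∈A} ‖x − x^k_{A,M} − ẑ‖_M for k ≥ 0 (a best approximator in A of the residual exists by proximinality). Then x^k_{A,M} converges to x in M: lim_{k→∞} ‖x^k_{A,M} − x‖_M = 0. -/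
open Filter Topology RealInnerProductSpace

theorem Submodule.real_inner_sub_eq_zero_of_forall_norm_sub_le {F : Type*}
    [NormedAddCommGroup F] [InnerProductSpace ℝ F] (K : Submodule ℝ F) {u v : F} (hv : v ∈ K)
    (hmin : ∀ w ∈ K, ‖u - v‖ ≤ ‖u - w‖) : ∀ w ∈ K, ⟪u - v, w⟫ = 0 := by
  refine (K.norm_eq_iInf_iff_real_inner_eq_zero hv).1 (le_antisymm ?_ ?_)
  · exact le_ciInf fun w => hmin w w.2
  · exact ciInf_le ⟨0, by rintro _ ⟨w, rfl⟩; exact norm_nonneg _⟩ (⟨v, hv⟩ : (K : Set F))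

theorem summable_of_eq_add_succ {a d : ℕ → ℝ} (ha : ∀ k, 0 ≤ a k) (hd : ∀ k, 0 ≤ d k)
    (h : ∀ k, d k = a k + d (k + 1)) : Summable a := by
  have hsum : ∀ n, ∑ k ∈ Finset.range n, a k = d 0 - d n := by
    intro n
    induction n with
    | zero => simp
    | succ n ih => rw [Finset.sum_range_succ, ih, h n]; ring
  exact summable_of_sum_range_le ha fun n => by linarith [hsum n, hd n]

namespace SparseApproxTriple

variable {H1 : Type*} [NormedAddCommGroup H1] [InnerProductSpace ℝ H1]
  {M : Type*} [NormedAddCommGroup M] [NormedSpace ℝ M] {I : Type*}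
  (S : SparseApproxTriple H1 M I)

theorem continuous_j : Continuous S.j :=
  AddMonoidHomClass.continuous_of_bound S.j 1 fun v => by simpa using S.j_norm_le v

theorem norm_eq_add_of_isBestApprox {v z : M} (h : IsBestApprox S.A v z) :
    ‖v‖ = ‖z‖ + ‖v - z‖ := by
  obtain ⟨i, hzi⟩ := Set.mem_iUnion.1 h.1
  exact S.norm_split_M i v z hzi fun w hw => h.2 w (Set.mem_iUnion.2 ⟨i, hw⟩)

theorem norm_le_of_isBestApprox {v y z : M} {i : I} (h : IsBestApprox S.A v z)
    (hy : y ∈ S.Asub i) (hymin : ∀ w ∈ S.Asub i, ‖v - y‖ ≤ ‖v - w‖) : ‖y‖ ≤ ‖z‖ := by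
  have hsplit_y := S.norm_split_M i v y hy hymin
  have hsplit_z := S.norm_eq_add_of_isBestApprox h
  have hzy := h.2 y (Set.mem_iUnion.2 ⟨i, hy⟩)
  linarith

theorem inner_j_eq_of_forall_norm_sub_le {v y a : M} {i : I} (hy : y ∈ S.Asub i)
    (hymin : ∀ w ∈ S.Asub i, ‖v - y‖ ≤ ‖v - w‖) (ha : a ∈ S.Asub i) :
    ⟪S.j v, S.j a⟫ = ⟪S.j y, S.j a⟫ := by
  have hmin : ∀ u ∈ (S.Asub i).map S.j, ‖S.j v - S.j y‖ ≤ ‖S.j v - u‖ := by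
    rintro _ ⟨w, hw, rfl⟩
    exact S.common_best i v y hy hymin w hw
  have horth := Submodule.real_inner_sub_eq_zero_of_forall_norm_sub_le _
    (Submodule.mem_map_of_mem hy) hmin _ (Submodule.mem_map_of_mem ha)
  rwa [inner_sub_left, sub_eq_zero] at horth

theorem abs_inner_j_le_of_isBestApprox {v z a : M} (h : IsBestApprox S.A v z) (ha : a ∈ S.A) :
    |⟪S.j v, S.j a⟫| ≤ ‖z‖ * ‖S.j a‖ := by
  obtain ⟨i, hai⟩ := Set.mem_iUnion.1 ha
  obtain ⟨y, hy, hymin⟩ := S.prox (S.Asub i) ⟨0, (S.Asub i).zero_mem⟩ (S.Asub_closed i) v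
  calc |⟪S.j v, S.j a⟫| = |⟪S.j y, S.j a⟫| := by
        rw [S.inner_j_eq_of_forall_norm_sub_le hy hymin hai]
    _ ≤ ‖S.j y‖ * ‖S.j a‖ := abs_real_inner_le_norm _ _
    _ ≤ ‖z‖ * ‖S.j a‖ := by
        gcongr
        exact (S.j_norm_le y).trans (S.norm_le_of_isBestApprox h hy hymin)

theorem eq_zero_of_forall_inner_j_eq_zero {v : M} (h : ∀ a ∈ S.A, ⟪S.j v, S.j a⟫ = 0) :
    v = 0 := by
  refine S.j_inj ?_
  rw [map_zero]
  refine S.sparse_dense.eq_zero_of_inner_left (𝕜 := ℝ) ?_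
  rintro _ ⟨_, ⟨k, rfl⟩, f, hf, rfl⟩
  rw [inner_sum]
  exact Finset.sum_eq_zero fun n _ => h (f n) (hf n)

def IsGreedySeq (x : M) (g : ℕ → M) : Prop :=
  ∀ k, IsBestApprox S.A (x - g k) (g (k + 1) - g k)

namespace IsGreedySeq

variable {S} {x : M} {g : ℕ → M}

theorem norm_sub_eq_add (hg : S.IsGreedySeq x g) (k : ℕ) :
    ‖x - g k‖ = ‖g (k + 1) - g k‖ + ‖x - g (k + 1)‖ := by
  rw [S.norm_eq_add_of_isBestApprox (hg k), sub_sub_sub_cancel_right]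

theorem summable_norm_sub (hg : S.IsGreedySeq x g) : Summable fun k => ‖g (k + 1) - g k‖ :=
  summable_of_eq_add_succ (fun _ => norm_nonneg _) (fun _ => norm_nonneg _) hg.norm_sub_eq_add

theorem cauchySeq (hg : S.IsGreedySeq x g) : CauchySeq g :=
  cauchySeq_of_dist_le_of_summable _ (fun _ => (dist_comm _ _).trans_le (dist_eq_norm _ _).le)
    hg.summable_norm_sub

theorem tendsto_inner_j_sub_zero (hg : S.IsGreedySeq x g) {a : M} (ha : a ∈ S.A) :
    Tendsto (fun k => ⟪S.j (x - g k), S.j a⟫) atTop (𝓝 0) := by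
  refine squeeze_zero_norm (fun k => S.abs_inner_j_le_of_isBestApprox (hg k) ha) ?_
  simpa using hg.summable_norm_sub.tendsto_atTop_zero.mul_const ‖S.j a‖

end IsGreedySeq

end SparseApproxTriple

theorem greedy_algorithm_converges_general
    {H1 : Type*} [NormedAddCommGroup H1] [InnerProductSpace ℝ H1]
    {M : Type*} [NormedAddCommGroup M] [NormedSpace ℝ M] [CompleteSpace M]
    {I : Type*} (S : SparseApproxTriple H1 M I)
    (x : M) (g : ℕ → M)
    (hgrec : ∀ k : ℕ, IsBestApprox S.A (x - g k) (g (k + 1) - g k)) :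
    Filter.Tendsto g Filter.atTop (nhds x) := by
  have hg : S.IsGreedySeq x g := hgrec
  obtain ⟨l, hl⟩ := cauchySeq_tendsto_of_complete hg.cauchySeq
  have horth : ∀ a ∈ S.A, ⟪S.j (x - l), S.j a⟫ = 0 := fun a ha =>
    tendsto_nhds_unique
      (((S.continuous_j.tendsto _).comp (tendsto_const_nhds.sub hl)).inner tendsto_const_nhds)
      (hg.tendsto_inner_j_sub_zero ha)
  rwa [sub_eq_zero.1 (S.eq_zero_of_forall_inner_j_eq_zero horth)]

/-- For a sparse approximation triple `(A, M, H1)` and `x ∈ M`, the greedy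
sequence `x⁰ = 0`, `x^{k+1} = x^k + argmin_{ẑ ∈ A} ‖x − x^k − ẑ‖_M` converges to `x` in `M`. -/
theorem greedy_algorithm_converges
    {H1 : Type*} [NormedAddCommGroup H1] [InnerProductSpace ℝ H1] [CompleteSpace H1]
    {M : Type*} [NormedAddCommGroup M] [NormedSpace ℝ M] [CompleteSpace M]
    {I : Type*} (S : SparseApproxTriple H1 M I)
    (x : M) (g : ℕ → M) (hg0 : g 0 = 0)
    (hgrec : ∀ k : ℕ, IsBestApprox S.A (x - g k) (g (k + 1) - g k)) :
    Filter.Tendsto g Filter.atTop (nhds x) :=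
  greedy_algorithm_converges_general S x g hgrec
end
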